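/- arXiv:2304.12158 — 8 statements merged into one kernel-verified Lean document; each statement's English description precedes it below -/
import Mathlib

section
/- Let τ_A ∈ V be the profile assigning to each tree t the set τ_A(t) = {q ∈ Q | there exists an accepting run ρ of A on t with ρ(ε) = q}. Then τ_A = μx₁.νx₂.μx₃.νx₄.⋯.μx_{d−1}.νx_d.δ(x₁,…,x_d), i.e., τ_A equals the alternating nested fixed point of δ where odd-indexed variables are bound by least fixed points and even-indexed variables by greatest fixed points. -/
/-- An infinite binary tree over the alphabet `A`: a labelling of `{L,R}*`
(directions encoded as `Bool`, `L = false`, `R = true`). -/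
abbrev BTree (A : Type*) := List Bool → A

/-- The subtree of `t` rooted at the node `v`. -/
def BTree.subtree {A : Type*} (t : BTree A) (v : List Bool) : BTree A := fun w => t (v ++ w)

/-- The function `δ : V^d → V` induced by the automaton with transition relation `γ`
and priority map `Ω` (a state of 1-based priority `i` is mapped by `Ω` to `i − 1 : Fin d`):
`q ∈ δ(τ₁,…,τ_d)(t)` iff there is a transition `(q, t(ε), qL, qR) ∈ γ` with
`qL ∈ τ_{Ω(q)}(t.L)` and `qR ∈ τ_{Ω(q)}(t.R)`. -/
def deltaAut {A Q : Type*} {d : ℕ} (γ : Set (Q × A × Q × Q)) (Ω : Q → Fin d)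
    (τ : Fin d → BTree A → Set Q) : BTree A → Set Q := fun t =>
  {q | ∃ qL qR : Q, (q, t [], qL, qR) ∈ γ ∧
    qL ∈ τ (Ω q) (t.subtree [false]) ∧ qR ∈ τ (Ω q) (t.subtree [true])}

/-- `δ` is chain-continuous: it commutes with suprema and infima of nonempty chains. -/
def ChainContinuous {V : Type*} [CompleteLattice V] {d : ℕ} (δ : (Fin d → V) → V) : Prop :=
  ∀ C : Set (Fin d → V), C.Nonempty → IsChain (· ≤ ·) C →
    δ (sSup C) = sSup (δ '' C) ∧ δ (sInf C) = sInf (δ '' C)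

/-- `μx.f(x)`, the least fixed point of a monotone `f` (Knaster–Tarski). -/
noncomputable def lfpOf {V : Type*} [CompleteLattice V] (f : V → V) : V :=
  sInf {x | f x ≤ x}

/-- `νx.f(x)`, the greatest fixed point of a monotone `f` (Knaster–Tarski). -/
noncomputable def gfpOf {V : Type*} [CompleteLattice V] (f : V → V) : V :=
  sSup {x | x ≤ f x}

/-- `NestedAux δ k σ = ψ_{d+1−k}(σ)`, where `ψ_{d+1} = δ` and
`ψ_n(x₁,…,x_{n−1}) = μ/ν y_n. ψ_{n+1}(x₁,…,x_{n−1},y_n)` (μ for odd `n`, ν for even `n`).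
The partial assignment `σ` gives the value of `x_{j+1}` as `σ j`. -/
noncomputable def NestedAux {V : Type*} [CompleteLattice V] {d : ℕ}
    (δ : (Fin d → V) → V) : ℕ → (ℕ → V) → V
  | 0, σ => δ (fun i => σ i.val)
  | (k + 1), σ =>
      if Odd (d - k) then
        lfpOf (fun y => NestedAux δ k (fun j => if j = d - k - 1 then y else σ j))
      else
        gfpOf (fun y => NestedAux δ k (fun j => if j = d - k - 1 then y else σ j))

/-- The alternating nested fixed point
`μx₁.νx₂.μx₃.νx₄.⋯.μx_{d−1}.νx_d.δ(x₁,…,x_d)`. -/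
noncomputable def Nested {V : Type*} [CompleteLattice V] {d : ℕ}
    (δ : (Fin d → V) → V) : V :=
  NestedAux δ d (fun _ => ⊥)

/-- A run of the automaton with transitions `γ` on the tree `t`. -/
def IsRun {A Q : Type*} (γ : Set (Q × A × Q × Q)) (t : BTree A)
    (ρ : List Bool → Q) : Prop :=
  ∀ v : List Bool, (ρ v, t v, ρ (v ++ [false]), ρ (v ++ [true])) ∈ γ

/-- A run is accepting if on every infinite branch `w` the least 1-based priority
occurring infinitely often, i.e. `liminf_{n→∞} Ω(ρ(w↾n))`, is even. -/
def IsAccepting {Q : Type*} {d : ℕ} (Ω : Q → Fin d) (ρ : List Bool → Q) : Prop :=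
  ∀ w : ℕ → Bool,
    Even (Filter.liminf (fun n => (Ω (ρ ((List.range n).map w))).val + 1) Filter.atTop)

/-- The profile `τ_A` assigning to a tree `t` the set of states `q` from which
there is an accepting run of the automaton on `t`. -/
def tauAut {A Q : Type*} {d : ℕ} (γ : Set (Q × A × Q × Q)) (Ω : Q → Fin d) :
    BTree A → Set Q := fun t =>
  {q | ∃ ρ : List Bool → Q, IsRun γ t ρ ∧ IsAccepting Ω ρ ∧ ρ [] = q}

/-!
For `σ : ℕ → BTree A → Set Q`, let `partialProfile γ Ω m σ t` be the set of states from which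
there is a run on `t` that obeys the automaton only as long as all priorities met are `≥ m`
(priorities are 0-based, as `Ω` takes values in `Fin d`): a node of priority `j < m` hands its
children over to `σ j`, and every branch that never meets such a node is accepting. Then
`partialProfile 0 ⊥ = τ_A` and `partialProfile d σ = δ(σ)`, so by induction on `d - m` it suffices
that `partialProfile i σ` is the least (`i` even) or greatest (`i` odd) fixed point of
`Y ↦ partialProfile (i + 1) (σ[i ↦ Y])`.

It is a fixed point because a run can be cut below its priority-`i` nodes, and runs can be grafted
in there. For even `i`, an accepting run meets priority-`i` nodes only finitely often on each
branch (otherwise the least priority on it would be `i`, odd in 1-based terms), so these nodes are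
well-founded and induction over them puts the run into every prefixed point. For odd `i`, runs
taken from a postfixed point can be woven together without end: a branch crossing infinitely many
layers has least priority `i` and is accepting, and any other branch ends inside a single layer.
-/

open Filter

theorem BTree.subtree_subtree {A : Type*} (t : BTree A) (u v : List Bool) :
    (t.subtree u).subtree v = t.subtree (u ++ v) := by
  funext w
  simp [BTree.subtree]

namespace ParityTreeAutomaton

def branchPrefix (w : ℕ → Bool) (n : ℕ) : List Bool := (List.range n).map w

theorem branchPrefix_succ (w : ℕ → Bool) (n : ℕ) :
    branchPrefix w (n + 1) = branchPrefix w n ++ [w n] := by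
  simp [branchPrefix, List.range_succ]

theorem branchPrefix_succ' (w : ℕ → Bool) (n : ℕ) :
    branchPrefix w (n + 1) = w 0 :: branchPrefix (fun k => w (k + 1)) n := by
  simp [branchPrefix, List.range_succ_eq_map]

theorem branchPrefix_prefix (w : ℕ → Bool) {n k : ℕ} (h : n ≤ k) :
    branchPrefix w n <+: branchPrefix w k := by
  obtain ⟨j, rfl⟩ := Nat.exists_eq_add_of_le h
  induction j with
  | zero => exact List.prefix_rfl
  | succ j ih => exact (ih (by omega)).trans ⟨[w (n + j)], (branchPrefix_succ w _).symm⟩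

theorem eq_branchPrefix_of_prefix {w : ℕ → Bool} {u : List Bool} {n : ℕ}
    (h : u <+: branchPrefix w n) : u = branchPrefix w u.length := by
  have hlen : u.length ≤ n := by simpa [branchPrefix] using h.length_le
  rw [List.prefix_iff_eq_take.1 h, branchPrefix, ← List.map_take, List.take_range]
  simp [branchPrefix, hlen]

theorem exists_branchPrefix_eq_of_chain (g : ℕ → List Bool) (hg : ∀ n, g n <+: g (n + 1))
    (hlen : ∀ n, n ≤ (g n).length) : ∃ w, ∀ n, g n = branchPrefix w (g n).length := by
  have hmono : ∀ {a b}, a ≤ b → g a <+: g b := fun hab =>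
    Nat.le_induction List.prefix_rfl (fun b _ ih => ih.trans (hg b)) _ hab
  refine ⟨fun j => (g (j + 1)).getD j false, fun n =>
    List.ext_getElem (by simp [branchPrefix]) fun j h₁ _ => ?_⟩
  have hj : j < (g (j + 1)).length := hlen (j + 1)
  simp only [branchPrefix, List.getElem_map, List.getElem_range, List.getD_eq_getElem _ _ hj]
  rcases le_total n (j + 1) with h | h
  · exact (hmono h).getElem h₁
  · exact ((hmono h).getElem hj).symm

theorem wellFounded_of_not_frequently (S : Set (List Bool))
    (hS : ∀ w, ¬ ∃ᶠ n in atTop, branchPrefix w n ∈ S) :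
    WellFounded (fun u v : List Bool => ∃ x b, v ++ x ∈ S ∧ u = v ++ x ++ [b]) := by
  refine wellFounded_iff_isEmpty_descending_chain.2 ⟨fun ⟨g, hg⟩ => ?_⟩
  choose x b hxS hgx using hg
  have hstep : ∀ n, g n ++ x n <+: g (n + 1) := fun n => hgx n ▸ List.prefix_append _ _
  have hlen : ∀ n, n ≤ (g n).length := by
    intro n
    induction n with
    | zero => exact Nat.zero_le _
    | succ n ih =>
      rw [hgx n, List.length_append, List.length_append, List.length_singleton]
      omega
  obtain ⟨w, hw⟩ := exists_branchPrefix_eq_of_chain g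
    (fun n => (List.prefix_append _ _).trans (hstep n)) hlen
  refine hS w (frequently_atTop.2 fun N => ⟨(g N ++ x N).length, ?_, ?_⟩)
  · simp only [List.length_append]; have := hlen N; omega
  · have hpre : g N ++ x N <+: branchPrefix w (g (N + 1)).length := hw (N + 1) ▸ hstep N
    rw [← eq_branchPrefix_of_prefix hpre]
    exact hxS N

theorem liminf_eq_of_frequently_eq {a : ℕ → ℕ} {c : ℕ} (hle : ∀ n, c ≤ a n)
    (hfreq : ∃ᶠ n in atTop, a n = c) : liminf a atTop = c :=
  le_antisymm (liminf_le_of_frequently_le (hfreq.mono fun _ h => h.le))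
    (le_liminf_of_le (IsCoboundedUnder.of_frequently_le (hfreq.mono fun _ h => h.le))
      (.of_forall hle))

variable {A Q : Type*} {d : ℕ} (γ : Set (Q × A × Q × Q)) (Ω : Q → Fin d)

def Live (m : ℕ) : (List Bool → Q) → List Bool → Prop
  | _, [] => True
  | ρ, b :: v => m ≤ (Ω (ρ [])).val ∧ Live m (fun x => ρ (b :: x)) v

def LocallyValid (m : ℕ) (σ : ℕ → BTree A → Set Q) (t : BTree A) (ρ : List Bool → Q) : Prop :=
  (ρ [], t [], ρ [false], ρ [true]) ∈ γ ∧
    ((Ω (ρ [])).val < m → ∀ b, ρ [b] ∈ σ (Ω (ρ [])) (t.subtree [b]))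

def BranchAccepting (ρ : List Bool → Q) (w : ℕ → Bool) : Prop :=
  Even (liminf (fun n => (Ω (ρ (branchPrefix w n))).val + 1) atTop)

structure IsPartialRun (m : ℕ) (σ : ℕ → BTree A → Set Q) (t : BTree A) (ρ : List Bool → Q) :
    Prop where
  locallyValid : ∀ v, Live Ω m ρ v → LocallyValid γ Ω m σ (t.subtree v) (fun x => ρ (v ++ x))
  accepting : ∀ w, (∀ n, m ≤ (Ω (ρ (branchPrefix w n))).val) → BranchAccepting Ω ρ w

def partialProfile (m : ℕ) (σ : ℕ → BTree A → Set Q) : BTree A → Set Q :=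
  fun t => {q | ∃ ρ, IsPartialRun γ Ω m σ t ρ ∧ ρ [] = q}

variable {γ Ω} {m i : ℕ} {σ : ℕ → BTree A → Set Q} {t : BTree A} {ρ : List Bool → Q}

theorem live_zero (v : List Bool) : Live Ω 0 ρ v := by
  induction v generalizing ρ with
  | nil => trivial
  | cons b v ih => exact ⟨Nat.zero_le _, ih⟩

theorem Live.mono {m' : ℕ} (hm : m' ≤ m) {v : List Bool} (h : Live Ω m ρ v) : Live Ω m' ρ v := by
  induction v generalizing ρ with
  | nil => trivial
  | cons b v ih => exact ⟨hm.trans h.1, ih h.2⟩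

theorem live_append {u v : List Bool} :
    Live Ω m ρ (u ++ v) ↔ Live Ω m ρ u ∧ Live Ω m (fun x => ρ (u ++ x)) v := by
  induction u generalizing ρ with
  | nil => simp [Live]
  | cons b u ih => simp only [List.cons_append, Live, ih, and_assoc]

theorem live_concat {u : List Bool} {b : Bool} :
    Live Ω m ρ (u ++ [b]) ↔ Live Ω m ρ u ∧ m ≤ (Ω (ρ u)).val := by
  simp [live_append, Live]

theorem Live.of_prefix {u v : List Bool} (huv : u <+: v) (h : Live Ω m ρ v) : Live Ω m ρ u := by
  obtain ⟨x, rfl⟩ := huv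
  exact (live_append.1 h).1

theorem forall_live_branchPrefix_iff {w : ℕ → Bool} :
    (∀ n, Live Ω m ρ (branchPrefix w n)) ↔ ∀ n, m ≤ (Ω (ρ (branchPrefix w n))).val := by
  refine ⟨fun h n => ?_, fun h n => ?_⟩
  · exact (live_concat.1 (branchPrefix_succ w n ▸ h (n + 1))).2
  · induction n with
    | zero => trivial
    | succ n ih => rw [branchPrefix_succ]; exact live_concat.2 ⟨ih, h n⟩

theorem forall_live_branchPrefix_of_frequently {w : ℕ → Bool}
    (h : ∃ᶠ n in atTop, Live Ω m ρ (branchPrefix w n)) (n : ℕ) : Live Ω m ρ (branchPrefix w n) :=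
  let ⟨_, hk, hlive⟩ := frequently_atTop.1 h n
  hlive.of_prefix (branchPrefix_prefix w hk)

theorem forall_prio_branchPrefix_iff_tail {w : ℕ → Bool} :
    (∀ n, m ≤ (Ω (ρ (branchPrefix w n))).val) ↔ m ≤ (Ω (ρ [])).val ∧
      ∀ n, m ≤ (Ω (ρ (w 0 :: branchPrefix (fun k => w (k + 1)) n))).val := by
  refine ⟨fun h => ⟨h 0, fun n => branchPrefix_succ' w n ▸ h (n + 1)⟩, fun ⟨h₀, h⟩ n => ?_⟩
  cases n with
  | zero => exact h₀
  | succ n => rw [branchPrefix_succ']; exact h n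

theorem branchAccepting_iff_tail {w : ℕ → Bool} :
    BranchAccepting Ω ρ w ↔ BranchAccepting Ω (fun x => ρ (w 0 :: x)) (fun k => w (k + 1)) := by
  unfold BranchAccepting
  rw [← liminf_nat_add _ 1]
  simp only [branchPrefix_succ']

theorem branchAccepting_congr {ρ' : List Bool → Q} {w : ℕ → Bool}
    (h : ∀ n, ρ (branchPrefix w n) = ρ' (branchPrefix w n)) :
    BranchAccepting Ω ρ w ↔ BranchAccepting Ω ρ' w := by
  simp only [BranchAccepting, h]

theorem branchAccepting_iff_odd_of_frequently {w : ℕ → Bool}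
    (hle : ∀ n, i ≤ (Ω (ρ (branchPrefix w n))).val)
    (hfreq : ∃ᶠ n in atTop, (Ω (ρ (branchPrefix w n))).val = i) :
    BranchAccepting Ω ρ w ↔ Odd i := by
  rw [BranchAccepting, liminf_eq_of_frequently_eq (c := i + 1) (fun n => by simp [hle n])
    (hfreq.mono fun _ h => by rw [h])]
  exact Nat.even_add_one.trans Nat.not_even_iff_odd

theorem IsPartialRun.root (h : IsPartialRun γ Ω m σ t ρ) : LocallyValid γ Ω m σ t ρ :=
  h.locallyValid [] trivial

theorem IsPartialRun.tail (h : IsPartialRun γ Ω m σ t ρ) (hm : m ≤ (Ω (ρ [])).val) (b : Bool) :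
    IsPartialRun γ Ω m σ (t.subtree [b]) (fun x => ρ (b :: x)) where
  locallyValid v hv := h.locallyValid (b :: v) ⟨hm, hv⟩
  accepting w hw := branchAccepting_iff_tail.1 <|
    h.accepting (Stream'.cons b w) (forall_prio_branchPrefix_iff_tail.2 ⟨hm, hw⟩)

theorem IsPartialRun.restrict (h : IsPartialRun γ Ω m σ t ρ) {v : List Bool}
    (hv : Live Ω m ρ v) : IsPartialRun γ Ω m σ (t.subtree v) (fun x => ρ (v ++ x)) := by
  induction v generalizing t ρ with
  | nil => exact h
  | cons b v ih => exact ih (h.tail hv.1 b) hv.2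

theorem IsPartialRun.update {Y : BTree A → Set Q} (h : IsPartialRun γ Ω i σ t ρ)
    (hY : ∀ v b, Live Ω (i + 1) ρ v → (Ω (ρ v)).val = i →
      ρ (v ++ [b]) ∈ Y (t.subtree (v ++ [b]))) :
    IsPartialRun γ Ω (i + 1) (Function.update σ i Y) t ρ where
  locallyValid v hv := by
    obtain ⟨htr, hexit⟩ := h.locallyValid v (hv.mono i.le_succ)
    refine ⟨htr, fun hlt b => ?_⟩
    simp only [List.append_nil] at hlt hexit ⊢
    rcases (Nat.lt_succ_iff.1 hlt).lt_or_eq with hlt | heq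
    · rw [Function.update_of_ne hlt.ne]
      exact hexit hlt b
    · rw [heq, Function.update_self, BTree.subtree_subtree]
      exact hY v b hv heq
  accepting w hw := h.accepting w fun n => i.le_succ.trans (hw n)

theorem IsPartialRun.mem_of_prio_eq {Y : BTree A → Set Q}
    (h : IsPartialRun γ Ω (i + 1) (Function.update σ i Y) t ρ) (he : (Ω (ρ [])).val = i)
    (b : Bool) : ρ [b] ∈ Y (t.subtree [b]) := by
  simpa [he] using h.root.2 (by omega) b

theorem IsPartialRun.locallyValid_of_agree {Y : BTree A → Set Q} {ρ' : List Bool → Q}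
    (h : IsPartialRun γ Ω (i + 1) (Function.update σ i Y) t ρ) (h₀ : ρ' [] = ρ [])
    (h₁ : ∀ b, ρ' [b] = ρ [b]) : LocallyValid γ Ω i σ t ρ' := by
  obtain ⟨htr, hexit⟩ := h.root
  refine ⟨by simpa only [h₀, h₁] using htr, fun hlt b => ?_⟩
  rw [h₀] at hlt ⊢
  simpa [h₁, Function.update_of_ne hlt.ne] using hexit (by omega) b

theorem locallyValid_of_invariant (S : BTree A → (List Bool → Q) → Prop)
    (hS : ∀ t ρ, S t ρ → LocallyValid γ Ω m σ t ρ ∧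
      (m ≤ (Ω (ρ [])).val → ∀ b, S (t.subtree [b]) (fun x => ρ (b :: x))))
    (h : S t ρ) (v : List Bool) (hv : Live Ω m ρ v) :
    LocallyValid γ Ω m σ (t.subtree v) (fun x => ρ (v ++ x)) := by
  induction v generalizing t ρ with
  | nil => exact (hS t ρ h).1
  | cons b v ih => exact ih ((hS t ρ h).2 hv.1 b) hv.2

theorem exists_selector_partialProfile (m : ℕ) (σ : ℕ → BTree A → Set Q) :
    ∃ c : BTree A → Q → List Bool → Q, ∀ s q, c s q [] = q ∧
      (q ∈ partialProfile γ Ω m σ s → IsPartialRun γ Ω m σ s (c s q)) := by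
  classical
  refine ⟨fun s q => if h : q ∈ partialProfile γ Ω m σ s then h.choose else fun _ => q,
    fun s q => ?_⟩
  by_cases h : q ∈ partialProfile γ Ω m σ s
  · simpa [h] using h.choose_spec.symm
  · simp [h]

variable (Ω) in
def graft (i : ℕ) (k : BTree A → Q → List Bool → Q) :
    BTree A → (List Bool → Q) → List Bool → Q
  | _, ρ, [] => ρ []
  | t, ρ, b :: v =>
      if (Ω (ρ [])).val = i then k (t.subtree [b]) (ρ [b]) v
      else graft i k (t.subtree [b]) (fun x => ρ (b :: x)) v

section Graft

variable {k : BTree A → Q → List Bool → Q}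

theorem graft_cons_of_eq (he : (Ω (ρ [])).val = i) (b : Bool) (x : List Bool) :
    graft Ω i k t ρ (b :: x) = k (t.subtree [b]) (ρ [b]) x := by
  simp [graft, he]

theorem graft_cons_of_ne (hne : (Ω (ρ [])).val ≠ i) (b : Bool) (x : List Bool) :
    graft Ω i k t ρ (b :: x) = graft Ω i k (t.subtree [b]) (fun x => ρ (b :: x)) x := by
  simp [graft, hne]

theorem graft_singleton (hk : ∀ s q, k s q [] = q) (b : Bool) : graft Ω i k t ρ [b] = ρ [b] := by
  by_cases he : (Ω (ρ [])).val = i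
  · rw [graft_cons_of_eq he, hk]
  · rw [graft_cons_of_ne he]; rfl

theorem graft_eq_of_live {v : List Bool} (hv : Live Ω (i + 1) ρ v) : graft Ω i k t ρ v = ρ v := by
  induction v generalizing t ρ with
  | nil => rfl
  | cons b v ih => rw [graft_cons_of_ne (by have := hv.1; omega)]; exact ih hv.2

variable (hk : ∀ s q, k s q [] = q ∧
  (q ∈ partialProfile γ Ω i σ s → IsPartialRun γ Ω i σ s (k s q)))
include hk

theorem branchAccepting_graft_of_not_live (n : ℕ) {w : ℕ → Bool}
    (hρ : IsPartialRun γ Ω (i + 1) (Function.update σ i (partialProfile γ Ω i σ)) t ρ)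
    (hn : ¬ Live Ω (i + 1) ρ (branchPrefix w n))
    (hw : ∀ n, i ≤ (Ω (graft Ω i k t ρ (branchPrefix w n))).val) :
    BranchAccepting Ω (graft Ω i k t ρ) w := by
  induction n generalizing t ρ w with
  | zero => exact absurd trivial hn
  | succ n ih =>
    rw [forall_prio_branchPrefix_iff_tail] at hw
    rw [branchPrefix_succ'] at hn
    rw [branchAccepting_iff_tail]
    by_cases he : (Ω (ρ [])).val = i
    · simp only [graft_cons_of_eq he] at hw ⊢
      exact ((hk _ _).2 (hρ.mem_of_prio_eq he _)).accepting _ hw.2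
    · have hgt : i + 1 ≤ (Ω (ρ [])).val := by have : i ≤ (Ω (ρ [])).val := hw.1; omega
      simp only [graft_cons_of_ne he] at hw ⊢
      exact ih (hρ.tail hgt _) (fun h => hn ⟨hgt, h⟩) hw.2

theorem isPartialRun_graft
    (hρ : IsPartialRun γ Ω (i + 1) (Function.update σ i (partialProfile γ Ω i σ)) t ρ) :
    IsPartialRun γ Ω i σ t (graft Ω i k t ρ) where
  locallyValid := by
    refine locallyValid_of_invariant (fun t R => IsPartialRun γ Ω i σ t R ∨
      ∃ ρ, IsPartialRun γ Ω (i + 1) (Function.update σ i (partialProfile γ Ω i σ)) t ρ ∧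
        R = graft Ω i k t ρ) ?_ (Or.inr ⟨ρ, hρ, rfl⟩)
    rintro t R (hR | ⟨ρ, hρ, rfl⟩)
    · exact ⟨hR.root, fun hm b => Or.inl (hR.tail hm b)⟩
    refine ⟨hρ.locallyValid_of_agree rfl (graft_singleton fun s q => (hk s q).1), fun hm b => ?_⟩
    by_cases he : (Ω (ρ [])).val = i
    · simp only [graft_cons_of_eq he]
      exact Or.inl ((hk _ _).2 (hρ.mem_of_prio_eq he b))
    · have hgt : i + 1 ≤ (Ω (ρ [])).val := by change i ≤ (Ω (ρ [])).val at hm; omega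
      exact Or.inr ⟨_, hρ.tail hgt b, funext (graft_cons_of_ne he b)⟩
  accepting w hw := by
    by_cases hl : ∀ n, Live Ω (i + 1) ρ (branchPrefix w n)
    · rw [branchAccepting_congr fun n => graft_eq_of_live (hl n)]
      exact hρ.accepting w (forall_live_branchPrefix_iff.1 hl)
    · obtain ⟨n, hn⟩ := not_forall.1 hl
      exact branchAccepting_graft_of_not_live hk n hρ hn hw

end Graft

theorem partialProfile_update_le :
    partialProfile γ Ω (i + 1) (Function.update σ i (partialProfile γ Ω i σ)) ≤
      partialProfile γ Ω i σ := by
  obtain ⟨k, hk⟩ := exists_selector_partialProfile (γ := γ) (Ω := Ω) i σ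
  rintro t _ ⟨ρ, hρ, rfl⟩
  exact ⟨graft Ω i k t ρ, isPartialRun_graft hk hρ, rfl⟩

variable (Ω) in
def weave (i : ℕ) (c : BTree A → Q → List Bool → Q) :
    BTree A → (List Bool → Q) → List Bool → Q
  | _, ρ, [] => ρ []
  | t, ρ, b :: v => weave i c (t.subtree [b])
      (if (Ω (ρ [])).val = i then c (t.subtree [b]) (ρ [b]) else fun x => ρ (b :: x)) v

section Weave

variable {c : BTree A → Q → List Bool → Q}

theorem weave_cons_of_eq (he : (Ω (ρ [])).val = i) (b : Bool) (x : List Bool) :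
    weave Ω i c t ρ (b :: x) = weave Ω i c (t.subtree [b]) (c (t.subtree [b]) (ρ [b])) x := by
  simp [weave, he]

theorem weave_cons_of_ne (hne : (Ω (ρ [])).val ≠ i) (b : Bool) (x : List Bool) :
    weave Ω i c t ρ (b :: x) = weave Ω i c (t.subtree [b]) (fun x => ρ (b :: x)) x := by
  simp [weave, hne]

theorem weave_singleton (hc : ∀ s q, c s q [] = q) (b : Bool) : weave Ω i c t ρ [b] = ρ [b] := by
  by_cases he : (Ω (ρ [])).val = i
  · rw [weave_cons_of_eq he]; exact hc _ _
  · rw [weave_cons_of_ne he]; rfl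

theorem weave_eq_of_live {v : List Bool} (hv : Live Ω (i + 1) (weave Ω i c t ρ) v) :
    weave Ω i c t ρ v = ρ v := by
  induction v generalizing t ρ with
  | nil => rfl
  | cons b v ih =>
    have hne : (Ω (ρ [])).val ≠ i := by have : i + 1 ≤ (Ω (ρ [])).val := hv.1; omega
    have hv' := hv.2
    simp only [weave_cons_of_ne hne] at hv' ⊢
    exact ih hv'

variable {Y : BTree A → Set Q} (hc : ∀ s q, c s q [] = q ∧
  (q ∈ partialProfile γ Ω (i + 1) (Function.update σ i Y) s →
    IsPartialRun γ Ω (i + 1) (Function.update σ i Y) s (c s q)))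
  (hY : Y ≤ partialProfile γ Ω (i + 1) (Function.update σ i Y))
include hc hY

theorem exists_weave_cons (hρ : IsPartialRun γ Ω (i + 1) (Function.update σ i Y) t ρ)
    (hm : i ≤ (Ω (ρ [])).val) (b : Bool) :
    ∃ ρ', IsPartialRun γ Ω (i + 1) (Function.update σ i Y) (t.subtree [b]) ρ' ∧
      ∀ x, weave Ω i c t ρ (b :: x) = weave Ω i c (t.subtree [b]) ρ' x := by
  by_cases he : (Ω (ρ [])).val = i
  · exact ⟨_, (hc _ _).2 (hY _ (hρ.mem_of_prio_eq he b)), weave_cons_of_eq he b⟩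
  · exact ⟨_, hρ.tail (by omega) b, weave_cons_of_ne he b⟩

theorem branchAccepting_weave_of_eventually_ne (N : ℕ) {w : ℕ → Bool}
    (hρ : IsPartialRun γ Ω (i + 1) (Function.update σ i Y) t ρ)
    (hw : ∀ n, i ≤ (Ω (weave Ω i c t ρ (branchPrefix w n))).val)
    (hN : ∀ n, N ≤ n → (Ω (weave Ω i c t ρ (branchPrefix w n))).val ≠ i) :
    BranchAccepting Ω (weave Ω i c t ρ) w := by
  induction N generalizing t ρ w with
  | zero =>
    have hgt : ∀ n, i + 1 ≤ (Ω (weave Ω i c t ρ (branchPrefix w n))).val := fun n =>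
      (hw n).lt_of_ne (hN n n.zero_le).symm
    have heq := fun n => weave_eq_of_live (forall_live_branchPrefix_iff.2 hgt n)
    rw [branchAccepting_congr heq]
    exact hρ.accepting w fun n => heq n ▸ hgt n
  | succ N ih =>
    rw [forall_prio_branchPrefix_iff_tail] at hw
    obtain ⟨ρ', hρ', heq⟩ := exists_weave_cons hc hY hρ hw.1 (w 0)
    rw [branchAccepting_iff_tail]
    simp only [heq] at hw ⊢
    refine ih hρ' hw.2 fun n hn => ?_
    simpa only [branchPrefix_succ', heq] using hN (n + 1) (by omega)

theorem isPartialRun_weave (hi : Odd i)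
    (hρ : IsPartialRun γ Ω (i + 1) (Function.update σ i Y) t ρ) :
    IsPartialRun γ Ω i σ t (weave Ω i c t ρ) where
  locallyValid := by
    refine locallyValid_of_invariant (fun t R =>
      ∃ ρ, IsPartialRun γ Ω (i + 1) (Function.update σ i Y) t ρ ∧ R = weave Ω i c t ρ) ?_
      ⟨ρ, hρ, rfl⟩
    rintro t _ ⟨ρ, hρ, rfl⟩
    refine ⟨hρ.locallyValid_of_agree rfl (weave_singleton fun s q => (hc s q).1), fun hm b => ?_⟩
    obtain ⟨ρ', hρ', heq⟩ := exists_weave_cons hc hY hρ hm b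
    exact ⟨ρ', hρ', funext heq⟩
  accepting w hw := by
    by_cases hfreq : ∃ᶠ n in atTop, (Ω (weave Ω i c t ρ (branchPrefix w n))).val = i
    · exact (branchAccepting_iff_odd_of_frequently hw hfreq).2 hi
    · obtain ⟨N, hN⟩ := eventually_atTop.1 (not_frequently.1 hfreq)
      exact branchAccepting_weave_of_eventually_ne hc hY N hρ hw hN

end Weave

theorem le_partialProfile_of_le_update (hi : Odd i) {Y : BTree A → Set Q}
    (hY : Y ≤ partialProfile γ Ω (i + 1) (Function.update σ i Y)) :
    Y ≤ partialProfile γ Ω i σ := by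
  obtain ⟨c, hc⟩ := exists_selector_partialProfile (γ := γ) (Ω := Ω) (i + 1) (Function.update σ i Y)
  intro t q hq
  exact ⟨weave Ω i c t (c t q), isPartialRun_weave hc hY hi ((hc t q).2 (hY t hq)), (hc t q).1⟩

theorem partialProfile_le_update :
    partialProfile γ Ω i σ ≤
      partialProfile γ Ω (i + 1) (Function.update σ i (partialProfile γ Ω i σ)) := by
  rintro t _ ⟨ρ, hρ, rfl⟩
  exact ⟨ρ, hρ.update fun v b hv he =>
    ⟨_, hρ.restrict (live_concat.2 ⟨hv.mono i.le_succ, he.ge⟩), by simp⟩, rfl⟩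

theorem partialProfile_le_of_update_le (hi : Even i) {Z : BTree A → Set Q}
    (hZ : partialProfile γ Ω (i + 1) (Function.update σ i Z) ≤ Z) :
    partialProfile γ Ω i σ ≤ Z := by
  rintro t _ ⟨ρ, hρ, rfl⟩
  have hfin : ∀ w, ¬ ∃ᶠ n in atTop,
      branchPrefix w n ∈ {s | Live Ω i ρ s ∧ (Ω (ρ s)).val = i} := by
    intro w hfreq
    have hle := forall_live_branchPrefix_iff.1
      (forall_live_branchPrefix_of_frequently (hfreq.mono fun _ h => h.1))
    exact Nat.not_odd_iff_even.2 hi <|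
      (branchAccepting_iff_odd_of_frequently hle (hfreq.mono fun _ h => h.2)).1 (hρ.accepting w hle)
  have key : ∀ v, Live Ω i ρ v → ρ v ∈ Z (t.subtree v) := by
    intro v
    induction v using (wellFounded_of_not_frequently _ hfin).induction with
    | _ v ih =>
      intro hv
      refine hZ _ ⟨_, (hρ.restrict hv).update fun x b hx he => ?_, by simp⟩
      have hvx : Live Ω i ρ (v ++ x) := live_append.2 ⟨hv, hx.mono i.le_succ⟩
      rw [BTree.subtree_subtree]
      simpa only [List.append_assoc] using
        ih _ ⟨x, b, ⟨hvx, he⟩, rfl⟩ (live_concat.2 ⟨hvx, he.ge⟩)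
  exact key [] trivial

variable (γ Ω)

theorem partialProfile_zero : partialProfile γ Ω 0 (fun _ => ⊥) = tauAut γ Ω := by
  ext t q
  constructor
  · rintro ⟨ρ, hρ, hq⟩
    exact ⟨ρ, fun v => by simpa [BTree.subtree] using (hρ.locallyValid v (live_zero v)).1,
      fun w => hρ.accepting w fun _ => Nat.zero_le _, hq⟩
  · rintro ⟨ρ, hrun, hacc, hq⟩
    exact ⟨ρ, ⟨fun v _ => ⟨by simpa [BTree.subtree] using hrun v, fun h => absurd h (by omega)⟩,
      fun w _ => hacc w⟩, hq⟩

theorem deltaAut_eq_partialProfile (σ : ℕ → BTree A → Set Q) :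
    deltaAut γ Ω (fun j => σ j) = partialProfile γ Ω d σ := by
  ext t q
  constructor
  · rintro ⟨qL, qR, htr, hL, hR⟩
    refine ⟨fun v => match v with | [] => q | b :: _ => bif b then qR else qL,
      ⟨fun v hv => ?_, fun w hw => absurd (hw 0) (Ω _).isLt.not_ge⟩, rfl⟩
    cases v with
    | nil => exact ⟨htr, fun _ b => by cases b <;> assumption⟩
    | cons b v => exact absurd hv.1 (Ω _).isLt.not_ge
  · rintro ⟨ρ, hρ, rfl⟩
    exact ⟨ρ [false], ρ [true], hρ.root.1, hρ.root.2 (Ω _).isLt false,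
      hρ.root.2 (Ω _).isLt true⟩

theorem lfpOf_partialProfile (hi : Even i) (σ : ℕ → BTree A → Set Q) :
    lfpOf (fun Y => partialProfile γ Ω (i + 1) (Function.update σ i Y)) =
      partialProfile γ Ω i σ :=
  le_antisymm (sInf_le partialProfile_update_le)
    (le_sInf fun _ hZ => partialProfile_le_of_update_le hi hZ)

theorem gfpOf_partialProfile (hi : Odd i) (σ : ℕ → BTree A → Set Q) :
    gfpOf (fun Y => partialProfile γ Ω (i + 1) (Function.update σ i Y)) =
      partialProfile γ Ω i σ :=
  le_antisymm (sSup_le fun _ hY => le_partialProfile_of_le_update hi hY)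
    (le_sSup partialProfile_le_update)

theorem nestedAux_deltaAut (k : ℕ) (hk : k ≤ d) (σ : ℕ → BTree A → Set Q) :
    NestedAux (deltaAut γ Ω) k σ = partialProfile γ Ω (d - k) σ := by
  induction k generalizing σ with
  | zero => exact deltaAut_eq_partialProfile γ Ω σ
  | succ k ih =>
    obtain ⟨i, hi⟩ : ∃ i, d - k = i + 1 := ⟨d - k - 1, by omega⟩
    have hupd : ∀ Y, (fun j => if j = d - k - 1 then Y else σ j) = Function.update σ i Y :=
      fun Y => by funext j; simp [Function.update_apply, hi]
    simp only [NestedAux, hupd]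
    simp only [ih (by omega), hi, show d - (k + 1) = i by omega]
    split_ifs with hodd
    · exact lfpOf_partialProfile γ Ω (Nat.not_odd_iff_even.1 (Nat.odd_add_one.1 hodd)) σ
    · exact gfpOf_partialProfile γ Ω (by simpa [Nat.odd_add_one] using hodd) σ

end ParityTreeAutomaton

theorem stmt1_general {A Q : Type*} {d : ℕ}
    (γ : Set (Q × A × Q × Q)) (Ω : Q → Fin d) :
    tauAut γ Ω = Nested (deltaAut γ Ω) := by
  rw [Nested, ParityTreeAutomaton.nestedAux_deltaAut γ Ω d le_rfl, Nat.sub_self,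
    ParityTreeAutomaton.partialProfile_zero]

/-- `τ_A = μx₁.νx₂.μx₃.νx₄.⋯.μx_{d−1}.νx_d.δ(x₁,…,x_d)`. -/
theorem stmt1 {A Q : Type*} [Fintype A] [Fintype Q] {d : ℕ}
    (hd : 1 ≤ d) (hde : Even d)
    (γ : Set (Q × A × Q × Q)) (Ω : Q → Fin d) :
    tauAut γ Ω = Nested (deltaAut γ Ω) :=
  stmt1_general γ Ω
end

section
/- Assume that F : V^d ⇀ V^d is a partial function that is n-stable on A ⊆ V^d. If F is ascending on A, then lim↑F is n-stable on A. Dually, if F is descending on A, then lim↓F is n-stable on A. -/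
open scoped Classical

/-- `Δ(τ̄)_i = δ(τ₁,…,τ_{i−1},τ_i,τ_i,…,τ_i)` (with 0-based indices, the `j`-th
argument of `δ` is `τ_{min i j}`). -/
def Delta {V : Type*} [CompleteLattice V] {d : ℕ} (δ : (Fin d → V) → V)
    (τ : Fin d → V) : Fin d → V :=
  fun i => δ (fun j => τ (min i j))

/-- The parity order `1 ≺ 3 ≺ 5 ≺ ⋯ ≺ 6 ≺ 4 ≺ 2` (on positive naturals). -/
def ParityLE (m n : ℕ) : Prop :=
  (Odd m ∧ Even n) ∨ (Odd m ∧ Odd n ∧ m ≤ n) ∨ (Even m ∧ Even n ∧ n ≤ m)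

/-- `τ̄` is ordered: `τ_i ≤ τ_j` whenever `i ⪯ j` in the parity order
(1-based positions). -/
def IsOrdered {V : Type*} [CompleteLattice V] {d : ℕ} (τ : Fin d → V) : Prop :=
  ∀ i j : Fin d, ParityLE (i.val + 1) (j.val + 1) → τ i ≤ τ j

/-- `τ̄` is `n`-fixed: all coordinates at 1-based positions `≥ n` are equal
(to the coordinate at position `n`). -/
def IsNFixed {V : Type*} {d : ℕ} (n : ℕ) (τ : Fin d → V) : Prop :=
  ∀ i j : Fin d, n ≤ i.val + 1 → n ≤ j.val + 1 → τ i = τ j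

/-- `τ̄` is `n`-saturated: `Δ(τ̄)_i = τ_i` for all 1-based positions `i ≤ n − 1`. -/
def IsNSaturated {V : Type*} [CompleteLattice V] {d : ℕ} (δ : (Fin d → V) → V)
    (n : ℕ) (τ : Fin d → V) : Prop :=
  ∀ i : Fin d, i.val + 2 ≤ n → Delta δ τ i = τ i

/-- The set `S_n ⊆ V^d`. -/
def SN {V : Type*} [CompleteLattice V] {d : ℕ} (δ : (Fin d → V) → V) (n : ℕ) :
    Set (Fin d → V) :=
  {τ | IsOrdered τ ∧ IsNFixed n τ ∧ IsNSaturated δ n τ ∧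
    (Odd n → τ ≤ Delta δ τ) ∧ (Even n → Delta δ τ ≤ τ)}

/-- A partial function `X ⇀ X`, given by a total function together with a domain. -/
structure PFunc (X : Type*) where
  toFun : X → X
  dom : Set X

/-- A total function, seen as a partial function. -/
def PFunc.total {X : Type*} (f : X → X) : PFunc X := ⟨f, Set.univ⟩

/-- The set of fixed points of a partial function. -/
def PFunc.Fix {X : Type*} (F : PFunc X) : Set X := {x | x ∈ F.dom ∧ F.toFun x = x}

/-- Composition `F;G : x ↦ G(F(x))` of partial functions. -/
def PFunc.comp {X : Type*} (F G : PFunc X) : PFunc X :=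
  ⟨fun x => G.toFun (F.toFun x), {x | x ∈ F.dom ∧ F.toFun x ∈ G.dom}⟩

/-- `lim↑F` maps `x` to the least fixed point of `F` that is `≥ x`; its domain is
the set of `x` for which such a least fixed point exists. -/
noncomputable def limUp {X : Type*} [PartialOrder X] (F : PFunc X) : PFunc X where
  toFun x := if h : ∃ y, IsLeast {z | z ∈ F.Fix ∧ x ≤ z} y then h.choose else x
  dom := {x | ∃ y, IsLeast {z | z ∈ F.Fix ∧ x ≤ z} y}

/-- `lim↓F` maps `x` to the greatest fixed point of `F` that is `≤ x`. -/
noncomputable def limDown {X : Type*} [PartialOrder X] (F : PFunc X) : PFunc X where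
  toFun x := if h : ∃ y, IsGreatest {z | z ∈ F.Fix ∧ z ≤ x} y then h.choose else x
  dom := {x | ∃ y, IsGreatest {z | z ∈ F.Fix ∧ z ≤ x} y}

/-- A partial function is monotone (order-preserving on its domain). -/
def MonotonePF {X : Type*} [Preorder X] (F : PFunc X) : Prop :=
  ∀ x ∈ F.dom, ∀ y ∈ F.dom, x ≤ y → F.toFun x ≤ F.toFun y

/-- `A` is a chain-complete subset: every nonempty chain contained in `A` has a
supremum and an infimum (in `X`) which belong to `A`. -/
def ChainCompleteIn {X : Type*} [Preorder X] (A : Set X) : Prop :=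
  ∀ C : Set X, C ⊆ A → C.Nonempty → IsChain (· ≤ ·) C →
    (∃ y ∈ A, IsLUB C y) ∧ (∃ y ∈ A, IsGLB C y)

/-- A monotone partial function `F` is ascending on `A`. -/
def AscendingOn {X : Type*} [Preorder X] (F : PFunc X) (A : Set X) : Prop :=
  MonotonePF F ∧ A ⊆ F.dom ∧ ChainCompleteIn A ∧ ∀ x ∈ A, F.toFun x ∈ A ∧ x ≤ F.toFun x

/-- A monotone partial function `F` is descending on `A`. -/
def DescendingOn {X : Type*} [Preorder X] (F : PFunc X) (A : Set X) : Prop :=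
  MonotonePF F ∧ A ⊆ F.dom ∧ ChainCompleteIn A ∧ ∀ x ∈ A, F.toFun x ∈ A ∧ F.toFun x ≤ x

/-- `F` is `n`-stable on `A`: `A ⊆ dom(F)` and `F` preserves the coordinates at
1-based positions `≤ n − 1` of every element of `A`. -/
def NStableOn {V : Type*} {d : ℕ} (F : PFunc (Fin d → V)) (n : ℕ)
    (A : Set (Fin d → V)) : Prop :=
  A ⊆ F.dom ∧ ∀ τ ∈ A, ∀ i : Fin d, i.val + 2 ≤ n → F.toFun τ i = τ i

/-- Dual of `zorn_le_nonempty₀`: existence of a minimal element below `x`. -/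
lemma zorn_ge_nonempty₀' {α : Type*} [PartialOrder α] (s : Set α)
    (ih : ∀ c ⊆ s, IsChain (· ≤ ·) c → ∀ y ∈ c, ∃ lb ∈ s, ∀ z ∈ c, lb ≤ z)
    (x : α) (hxs : x ∈ s) :
    ∃ m ∈ s, m ≤ x ∧ ∀ z ∈ s, z ≤ m → m ≤ z := by
  obtain ⟨m, hxm, hms, hmax⟩ := zorn_le_nonempty₀ (α := αᵒᵈ) s (by
      intro c hcs hc y hy
      obtain ⟨lb, hlbs, hlb⟩ := ih c hcs (by
        intro a ha b hb hab
        exact (hc ha hb hab).symm) y hy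
      exact ⟨lb, hlbs, hlb⟩) x hxs
  exact ⟨m, hms, hxm, fun z hzs hzm => hmax hzs hzm⟩

/-- If `F : V^d ⇀ V^d` is `n`-stable on `A ⊆ V^d` and ascending on
`A`, then `lim↑F` is `n`-stable on `A`; dually, if `F` is descending on `A`, then
`lim↓F` is `n`-stable on `A`. -/
theorem stmt4 {V : Type*} [CompleteLattice V] {d : ℕ} (n : ℕ)
    (F : PFunc (Fin d → V)) (A : Set (Fin d → V))
    (hstable : NStableOn F n A) :
    (AscendingOn F A → NStableOn (limUp F) n A) ∧
    (DescendingOn F A → NStableOn (limDown F) n A) := by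
  obtain ⟨hdom, hfix⟩ := hstable
  constructor
  · rintro ⟨hmono, hAdom, hcc, hasc⟩
    have hkey : ∀ τ ∈ A, ∃ m, IsLeast {z | z ∈ F.Fix ∧ τ ≤ z} m ∧
        ∀ i : Fin d, i.val + 2 ≤ n → m i = τ i := by
      intro τ hτ
      set M : Set (Fin d → V) := {x | x ∈ A ∧ τ ≤ x ∧
        (∀ z ∈ F.Fix, τ ≤ z → x ≤ z) ∧ ∀ i : Fin d, i.val + 2 ≤ n → x i = τ i} with hM
      have hτM : τ ∈ M := ⟨hτ, le_rfl, fun z _ h => h, fun i _ => rfl⟩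
      have hzorn := zorn_le_nonempty₀ M ?_ τ hτM
      · obtain ⟨m, hτm, hmM, hmax⟩ := hzorn
        have hFmM : F.toFun m ∈ M := by
          refine ⟨(hasc m hmM.1).1, hτm.trans (hasc m hmM.1).2, ?_, ?_⟩
          · intro z hz hτz
            have := hmono m (hAdom hmM.1) z hz.1 (hmM.2.2.1 z hz hτz)
            rwa [hz.2] at this
          · intro i hi
            rw [hfix m hmM.1 i hi]; exact hmM.2.2.2 i hi
        have hFm : F.toFun m = m :=
          le_antisymm (hmax hFmM (hasc m hmM.1).2) (hasc m hmM.1).2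
        exact ⟨m, ⟨⟨⟨hAdom hmM.1, hFm⟩, hτm⟩, fun z hz => hmM.2.2.1 z hz.1 hz.2⟩,
          hmM.2.2.2⟩
      · intro c hcM hchain y hy
        obtain ⟨u, huA, hlub⟩ := (hcc c (fun x hx => (hcM hx).1) ⟨y, hy⟩ hchain).1
        refine ⟨u, ⟨huA, (hcM hy).2.1.trans (hlub.1 hy), ?_, ?_⟩, fun z hz => hlub.1 hz⟩
        · intro z hz hτz
          exact hlub.2 fun x hx => (hcM hx).2.2.1 z hz hτz
        · intro i hi
          refine le_antisymm ?_ ?_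
          · have : u ≤ Function.update (⊤ : Fin d → V) i (τ i) := by
              refine hlub.2 fun x hx j => ?_
              rcases eq_or_ne j i with rfl | hj
              · rw [Function.update_self]; exact le_of_eq ((hcM hx).2.2.2 j hi)
              · rw [Function.update_of_ne hj]; exact le_top
            simpa using this i
          · have := hlub.1 hy i
            rwa [(hcM hy).2.2.2 i hi] at this
    constructor
    · intro τ hτ
      obtain ⟨m, hm, _⟩ := hkey τ hτ
      exact ⟨m, hm⟩
    · intro τ hτ i hi
      obtain ⟨m, hm, hmi⟩ := hkey τ hτ
      have hex : ∃ y, IsLeast {z | z ∈ F.Fix ∧ τ ≤ z} y := ⟨m, hm⟩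
      show (if h : ∃ y, IsLeast {z | z ∈ F.Fix ∧ τ ≤ z} y then h.choose else τ) i = τ i
      rw [dif_pos hex]
      rw [hex.choose_spec.unique hm]
      exact hmi i hi
  · rintro ⟨hmono, hAdom, hcc, hdesc⟩
    have hkey : ∀ τ ∈ A, ∃ m, IsGreatest {z | z ∈ F.Fix ∧ z ≤ τ} m ∧
        ∀ i : Fin d, i.val + 2 ≤ n → m i = τ i := by
      intro τ hτ
      set M : Set (Fin d → V) := {x | x ∈ A ∧ x ≤ τ ∧
        (∀ z ∈ F.Fix, z ≤ τ → z ≤ x) ∧ ∀ i : Fin d, i.val + 2 ≤ n → x i = τ i} with hM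
      have hτM : τ ∈ M := ⟨hτ, le_rfl, fun z _ h => h, fun i _ => rfl⟩
      have hzorn := zorn_ge_nonempty₀' M ?_ τ hτM
      · obtain ⟨m, hmM, hτm, hmin⟩ := hzorn
        have hFmM : F.toFun m ∈ M := by
          refine ⟨(hdesc m hmM.1).1, (hdesc m hmM.1).2.trans hτm, ?_, ?_⟩
          · intro z hz hτz
            have := hmono z hz.1 m (hAdom hmM.1) (hmM.2.2.1 z hz hτz)
            rwa [hz.2] at this
          · intro i hi
            rw [hfix m hmM.1 i hi]; exact hmM.2.2.2 i hi
        have hFm : F.toFun m = m :=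
          le_antisymm (hdesc m hmM.1).2 (hmin _ hFmM (hdesc m hmM.1).2)
        exact ⟨m, ⟨⟨⟨hAdom hmM.1, hFm⟩, hτm⟩, fun z hz => hmM.2.2.1 z hz.1 hz.2⟩,
          hmM.2.2.2⟩
      · intro c hcM hchain y hy
        obtain ⟨u, huA, hglb⟩ := (hcc c (fun x hx => (hcM hx).1) ⟨y, hy⟩ hchain).2
        refine ⟨u, ⟨huA, (hglb.1 hy).trans (hcM hy).2.1, ?_, ?_⟩,
          fun z hz => show u ≤ z from hglb.1 hz⟩
        · intro z hz hτz
          exact hglb.2 fun x hx => (hcM hx).2.2.1 z hz hτz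
        · intro i hi
          refine le_antisymm ?_ ?_
          · have := hglb.1 hy i
            rwa [(hcM hy).2.2.2 i hi] at this
          · have : Function.update (⊥ : Fin d → V) i (τ i) ≤ u := by
              refine hglb.2 fun x hx j => ?_
              rcases eq_or_ne j i with rfl | hj
              · rw [Function.update_self]; exact le_of_eq ((hcM hx).2.2.2 j hi).symm
              · rw [Function.update_of_ne hj]; exact bot_le
            simpa using this i
    constructor
    · intro τ hτ
      obtain ⟨m, hm, _⟩ := hkey τ hτ
      exact ⟨m, hm⟩
    · intro τ hτ i hi
      obtain ⟨m, hm, hmi⟩ := hkey τ hτ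
      have hex : ∃ y, IsGreatest {z | z ∈ F.Fix ∧ z ≤ τ} y := ⟨m, hm⟩
      show (if h : ∃ y, IsGreatest {z | z ∈ F.Fix ∧ z ≤ τ} y then h.choose else τ) i = τ i
      rw [dif_pos hex]
      rw [hex.choose_spec.unique hm]
      exact hmi i hi
end

section
/- For every n ∈ {1,…,d+1}, the set S_n is a chain-complete subset of V^d: for every nonempty chain C ⊆ S_n, the supremum and the infimum of C (taken in V^d) belong to S_n. -/
open scoped Classical

/-!
Every condition defining `S_n` is preserved coordinatewise by suprema and infima: orderedness
and `n`-fixedness are closed conditions of the form `τ i ≤ τ j` resp. `τ i = τ j`. For the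
conditions involving `Δ`, note that each coordinate `Δ(τ̄)_i` is `δ` applied to the monotone
restriction `τ̄ ↦ (τ_{min i j})_j`, which maps a chain to a chain and commutes with suprema and
infima, so chain-continuity of `δ` gives `Δ(sup C) = sup Δ(C)` and `Δ(inf C) = inf Δ(C)`.
-/

section ChainLimits

variable {V : Type*} [CompleteLattice V] {d : ℕ} {δ : (Fin d → V) → V} {C : Set (Fin d → V)}

theorem delta_sSup (hcont : ChainContinuous δ) (hne : C.Nonempty) (hC : IsChain (· ≤ ·) C) :
    Delta δ (sSup C) = ⨆ τ : C, Delta δ τ := by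
  funext i
  let restrict : (Fin d → V) → (Fin d → V) := fun τ j => τ (min i j)
  have hrestrict : restrict (sSup C) = sSup (restrict '' C) := by
    funext j
    change sSup C (min i j) = sSup (restrict '' C) j
    rw [sSup_image', iSup_apply, sSup_apply]
  have hchain : IsChain (· ≤ ·) (restrict '' C) :=
    hC.image_of_map_rel _ _ restrict fun _ _ h _ => h _
  change δ (restrict (sSup C)) = _
  rw [hrestrict, (hcont _ (hne.image restrict) hchain).1, Set.image_image, sSup_image',
    iSup_apply]
  rfl

theorem delta_sInf (hcont : ChainContinuous δ) (hne : C.Nonempty) (hC : IsChain (· ≤ ·) C) :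
    Delta δ (sInf C) = ⨅ τ : C, Delta δ τ := by
  funext i
  let restrict : (Fin d → V) → (Fin d → V) := fun τ j => τ (min i j)
  have hrestrict : restrict (sInf C) = sInf (restrict '' C) := by
    funext j
    change sInf C (min i j) = sInf (restrict '' C) j
    rw [sInf_image', iInf_apply, sInf_apply]
  have hchain : IsChain (· ≤ ·) (restrict '' C) :=
    hC.image_of_map_rel _ _ restrict fun _ _ h _ => h _
  change δ (restrict (sInf C)) = _
  rw [hrestrict, (hcont _ (hne.image restrict) hchain).2, Set.image_image, sInf_image',
    iInf_apply]
  rfl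

theorem IsOrdered.sSup (h : ∀ τ ∈ C, IsOrdered τ) : IsOrdered (sSup C) := by
  intro i j hij
  simp only [sSup_apply]
  exact iSup_mono fun τ => h τ τ.2 i j hij

theorem IsOrdered.sInf (h : ∀ τ ∈ C, IsOrdered τ) : IsOrdered (sInf C) := by
  intro i j hij
  simp only [sInf_apply]
  exact iInf_mono fun τ => h τ τ.2 i j hij

theorem IsNFixed.sSup {n : ℕ} (h : ∀ τ ∈ C, IsNFixed n τ) : IsNFixed n (sSup C) := by
  intro i j hi hj
  simp only [sSup_apply]
  exact iSup_congr fun τ => h τ τ.2 i j hi hj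

theorem IsNFixed.sInf {n : ℕ} (h : ∀ τ ∈ C, IsNFixed n τ) : IsNFixed n (sInf C) := by
  intro i j hi hj
  simp only [sInf_apply]
  exact iInf_congr fun τ => h τ τ.2 i j hi hj

theorem IsNSaturated.sSup {n : ℕ} (hcont : ChainContinuous δ) (hne : C.Nonempty)
    (hC : IsChain (· ≤ ·) C) (h : ∀ τ ∈ C, IsNSaturated δ n τ) :
    IsNSaturated δ n (sSup C) := by
  intro i hi
  rw [delta_sSup hcont hne hC, iSup_apply, sSup_apply]
  exact iSup_congr fun τ => h τ τ.2 i hi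

theorem IsNSaturated.sInf {n : ℕ} (hcont : ChainContinuous δ) (hne : C.Nonempty)
    (hC : IsChain (· ≤ ·) C) (h : ∀ τ ∈ C, IsNSaturated δ n τ) :
    IsNSaturated δ n (sInf C) := by
  intro i hi
  rw [delta_sInf hcont hne hC, iInf_apply, sInf_apply]
  exact iInf_congr fun τ => h τ τ.2 i hi

theorem sSup_mem_SN {n : ℕ} (hcont : ChainContinuous δ) (hne : C.Nonempty)
    (hC : IsChain (· ≤ ·) C) (hCS : C ⊆ SN δ n) : sSup C ∈ SN δ n := by
  have hΔ := delta_sSup hcont hne hC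
  refine ⟨.sSup fun τ hτ => (hCS hτ).1, .sSup fun τ hτ => (hCS hτ).2.1,
    .sSup hcont hne hC fun τ hτ => (hCS hτ).2.2.1, fun hn => ?_, fun hn => ?_⟩
  · rw [hΔ, sSup_eq_iSup']
    exact iSup_mono fun τ => (hCS τ.2).2.2.2.1 hn
  · rw [hΔ, sSup_eq_iSup']
    exact iSup_mono fun τ => (hCS τ.2).2.2.2.2 hn

theorem sInf_mem_SN {n : ℕ} (hcont : ChainContinuous δ) (hne : C.Nonempty)
    (hC : IsChain (· ≤ ·) C) (hCS : C ⊆ SN δ n) : sInf C ∈ SN δ n := by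
  have hΔ := delta_sInf hcont hne hC
  refine ⟨.sInf fun τ hτ => (hCS hτ).1, .sInf fun τ hτ => (hCS hτ).2.1,
    .sInf hcont hne hC fun τ hτ => (hCS hτ).2.2.1, fun hn => ?_, fun hn => ?_⟩
  · rw [hΔ, sInf_eq_iInf']
    exact iInf_mono fun τ => (hCS τ.2).2.2.2.1 hn
  · rw [hΔ, sInf_eq_iInf']
    exact iInf_mono fun τ => (hCS τ.2).2.2.2.2 hn

end ChainLimits

theorem stmt5_general {V : Type*} [CompleteLattice V] {d : ℕ}
    (δ : (Fin d → V) → V) (hcont : ChainContinuous δ)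
    (n : ℕ) :
    ∀ C : Set (Fin d → V), C ⊆ SN δ n → C.Nonempty → IsChain (· ≤ ·) C →
      sSup C ∈ SN δ n ∧ sInf C ∈ SN δ n :=
  fun _ hCS hne hC => ⟨sSup_mem_SN hcont hne hC hCS, sInf_mem_SN hcont hne hC hCS⟩

/-- For `n ∈ {1,…,d+1}`, the set `S_n` is a chain-complete subset
of `V^d`: the supremum and the infimum (taken in `V^d`) of every nonempty chain
`C ⊆ S_n` belong to `S_n`. -/
theorem stmt5 {V : Type*} [CompleteLattice V] {d : ℕ} (hd : 1 ≤ d) (hde : Even d)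
    (δ : (Fin d → V) → V) (hmono : Monotone δ) (hcont : ChainContinuous δ)
    (n : ℕ) (hn1 : 1 ≤ n) (hnd : n ≤ d + 1) :
    ∀ C : Set (Fin d → V), C ⊆ SN δ n → C.Nonempty → IsChain (· ≤ ·) C →
      sSup C ∈ SN δ n ∧ sInf C ∈ SN δ n :=
  stmt5_general δ hcont n
end

section
/- For every n ∈ {1,…,d}, Δ maps S_n into S_n (i.e., τ̄ ∈ S_n implies Δ(τ̄) ∈ S_n), and moreover Δ is n-stable on S_n, i.e., Δ(τ̄)_i = τ_i for every τ̄ ∈ S_n and every i ∈ {1,…,n−1}. -/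
open scoped Classical

lemma parity_key {V : Type*} [CompleteLattice V] {d : ℕ} (τ : Fin d → V)
    (hord : IsOrdered τ) {i j : Fin d} (hij : ParityLE (i.val + 1) (j.val + 1))
    (k : Fin d) : τ (min i k) ≤ τ (min j k) := by
  rcases eq_or_ne i j with rfl | hne
  · exact le_rfl
  rcases le_or_gt i j with hle | hlt
  · have hij' : i.val < j.val := lt_of_le_of_ne hle (fun h => hne (Fin.ext h))
    rcases le_or_gt k i with hk | hk
    · rw [min_eq_right hk, min_eq_right (hk.trans hle)]
    · rw [min_eq_left hk.le]
      have hik : i.val < k.val := hk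
      have hodd : Odd (i.val + 1) := by
        rcases hij with ⟨h1, _⟩ | ⟨h1, _⟩ | ⟨h1, h2, h3⟩
        · exact h1
        · exact h1
        · omega
      rcases le_or_gt k j with hk2 | hk2
      · rw [min_eq_right hk2]
        apply hord
        rcases Nat.even_or_odd (k.val + 1) with he | ho
        · exact Or.inl ⟨hodd, he⟩
        · exact Or.inr (Or.inl ⟨hodd, ho, by omega⟩)
      · rw [min_eq_left hk2.le]
        exact hord _ _ hij
  · rcases le_or_gt k j with hk | hk
    · rw [min_eq_right hk, min_eq_right (hk.trans hlt.le)]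
    · rw [min_eq_left hk.le]
      have hjk : j.val < k.val := hk
      have hji : j.val < i.val := hlt
      have heven : Even (j.val + 1) := by
        rcases hij with ⟨_, h2⟩ | ⟨_, _, h3⟩ | ⟨_, h2, _⟩
        · exact h2
        · omega
        · exact h2
      rcases le_or_gt k i with hk2 | hk2
      · rw [min_eq_right hk2]
        apply hord
        rcases Nat.even_or_odd (k.val + 1) with he | ho
        · exact Or.inr (Or.inr ⟨he, heven, by omega⟩)
        · exact Or.inl ⟨ho, heven⟩
      · rw [min_eq_left hk2.le]
        exact hord _ _ hij

/-- For `n ∈ {1,…,d}`, `Δ` maps `S_n` into `S_n` and is `n`-stable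
on `S_n`: `Δ(τ̄)_i = τ_i` for every `τ̄ ∈ S_n` and every position `i ≤ n − 1`. -/
theorem stmt7 {V : Type*} [CompleteLattice V] {d : ℕ} (hd : 1 ≤ d) (hde : Even d)
    (δ : (Fin d → V) → V) (hmono : Monotone δ) (hcont : ChainContinuous δ)
    (n : ℕ) (hn1 : 1 ≤ n) (hnd : n ≤ d) :
    (∀ τ ∈ SN δ n, Delta δ τ ∈ SN δ n) ∧
    (∀ τ ∈ SN δ n, ∀ i : Fin d, i.val + 2 ≤ n → Delta δ τ i = τ i) := by
  constructor
  · rintro τ ⟨hord, hfix, hsat, hodd, heven⟩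
    refine ⟨?_, ?_, ?_, ?_, ?_⟩
    · intro i j hij
      exact hmono (fun k => parity_key τ hord hij k)
    · intro i j hi hj
      show δ _ = δ _
      congr 1
      funext k
      rcases le_or_gt k i with hki | hki
      · rcases le_or_gt k j with hkj | hkj
        · rw [min_eq_right hki, min_eq_right hkj]
        · rw [min_eq_right hki, min_eq_left hkj.le]
          have : j.val < k.val := hkj
          exact hfix k j (by omega) hj
      · rcases le_or_gt k j with hkj | hkj
        · rw [min_eq_left hki.le, min_eq_right hkj]
          have : i.val < k.val := hki
          exact hfix i k hi (by omega)
        · rw [min_eq_left hki.le, min_eq_left hkj.le]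
          exact hfix i j hi hj
    · intro i hi
      have key : (fun j => Delta δ τ (min i j)) = (fun j => τ (min i j)) := by
        funext j
        refine hsat (min i j) ?_
        have : (min i j).val ≤ i.val := min_le_left i j
        omega
      show δ (fun j => Delta δ τ (min i j)) = Delta δ τ i
      rw [key]
      rfl
    · intro hn
      have h1 : τ ≤ Delta δ τ := hodd hn
      exact fun i => hmono (fun j => h1 _)
    · intro hn
      have h1 : Delta δ τ ≤ τ := heven hn
      exact fun i => hmono (fun j => h1 _)
  · rintro τ ⟨_, _, hsat, _, _⟩ i hi
    exact hsat i hi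
end

section
/- For every odd n ∈ {1,…,d}: S_n ⊆ dom(lim↑Δ), for every τ̄ ∈ S_n one has (lim↑Δ)(τ̄) ∈ S_{n+1}, and lim↑Δ is n-stable on S_n. For every even n ∈ {1,…,d}: S_n ⊆ dom(lim↓Δ), for every τ̄ ∈ S_n one has (lim↓Δ)(τ̄) ∈ S_{n+1}, and lim↓Δ is n-stable on S_n. -/
open scoped Classical

section Aux

variable {V : Type*} [CompleteLattice V] {d : ℕ} {δ : (Fin d → V) → V}

lemma deltaMono (hmono : Monotone δ) : Monotone (Delta δ) :=
  fun _ _ h i => hmono fun j => h _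

lemma antitone_isChain_range {β : Type*} [Preorder β] {f : ℕ → β} (hf : Antitone f) :
    IsChain (· ≤ ·) (Set.range f) := by
  rintro _ ⟨a, rfl⟩ _ ⟨b, rfl⟩ _
  rcases le_total a b with h | h
  · exact Or.inr (hf h)
  · exact Or.inl (hf h)

lemma delta_iSup (hcont : ChainContinuous δ) {g : ℕ → Fin d → V} (hg : Monotone g) :
    Delta δ (⨆ k, g k) = fun i => ⨆ k, Delta δ (g k) i := by
  funext i
  have hm : Monotone (fun k => fun j => g k (min i j)) := fun a b hab j => hg hab _
  have h1 := (hcont _ (Set.range_nonempty _) hm.isChain_range).1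
  have h2 : (fun j => (⨆ k, g k) (min i j)) =
      sSup (Set.range fun k => fun j => g k (min i j)) := by
    rw [sSup_range]
    funext j
    simp [iSup_apply]
  show δ (fun j => (⨆ k, g k) (min i j)) = _
  rw [h2, h1, ← Set.range_comp, sSup_range]
  rfl

lemma delta_iInf (hcont : ChainContinuous δ) {g : ℕ → Fin d → V} (hg : Antitone g) :
    Delta δ (⨅ k, g k) = fun i => ⨅ k, Delta δ (g k) i := by
  funext i
  have hm : Antitone (fun k => fun j => g k (min i j)) := fun a b hab j => hg hab _
  have h1 := (hcont _ (Set.range_nonempty _) (antitone_isChain_range hm)).2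
  have h2 : (fun j => (⨅ k, g k) (min i j)) =
      sInf (Set.range fun k => fun j => g k (min i j)) := by
    rw [sInf_range]
    funext j
    simp [iInf_apply]
  show δ (fun j => (⨅ k, g k) (min i j)) = _
  rw [h2, h1, ← Set.range_comp, sInf_range]
  rfl

lemma fin_val_min (a b : Fin d) : (min a b).val = min a.val b.val := by
  rcases le_total a b with h | h
  · rw [min_eq_left h, min_eq_left (Fin.le_def.mp h)]
  · rw [min_eq_right h, min_eq_right (Fin.le_def.mp h)]

lemma odd_case (hmono : Monotone δ) (hcont : ChainContinuous δ)
    {n : ℕ} (hodd : Odd n) {τ : Fin d → V} (hτ : τ ∈ SN δ n) :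
    ∃ σ : Fin d → V, IsLeast {z | z ∈ (PFunc.total (Delta δ)).Fix ∧ τ ≤ z} σ ∧
      σ ∈ SN δ (n + 1) ∧ ∀ i : Fin d, i.val + 2 ≤ n → σ i = τ i := by
  obtain ⟨hord, hfix, hsat, hup, _⟩ := hτ
  have hle : τ ≤ Delta δ τ := hup hodd
  set g : ℕ → Fin d → V := fun k => (Delta δ)^[k] τ with hgdef
  have hgs : ∀ k, g (k + 1) = Delta δ (g k) := fun k => Function.iterate_succ_apply' _ _ _
  have hg0 : g 0 = τ := rfl
  have hgmono : Monotone g := by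
    apply monotone_nat_of_le_succ
    intro k
    induction k with
    | zero => rw [hgs, hg0]; exact hle
    | succ k ih => rw [hgs k] at ih; rw [hgs (k + 1), hgs k]; exact deltaMono hmono ih
  set σ : Fin d → V := ⨆ k, g k with hσdef
  have hτσ : τ ≤ σ := le_iSup g 0
  have hfixσ : Delta δ σ = σ := by
    rw [hσdef, delta_iSup hcont hgmono]
    funext i
    rw [iSup_apply]
    apply le_antisymm
    · refine iSup_le fun k => ?_
      rw [← hgs]
      exact le_iSup (fun k => g k i) (k + 1)
    · refine iSup_le fun k => ?_
      have h1 : g k i ≤ Delta δ (g k) i := by rw [← hgs]; exact hgmono (Nat.le_succ k) i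
      exact h1.trans (le_iSup (fun k => Delta δ (g k) i) k)
  have hleast : IsLeast {z | z ∈ (PFunc.total (Delta δ)).Fix ∧ τ ≤ z} σ := by
    constructor
    · exact ⟨⟨trivial, hfixσ⟩, hτσ⟩
    · rintro ρ ⟨⟨-, hρ⟩, hτρ⟩
      refine iSup_le fun k => ?_
      induction k with
      | zero => exact hτρ
      | succ k ih =>
        rw [hgs]
        calc Delta δ (g k) ≤ Delta δ ρ := deltaMono hmono ih
          _ = ρ := hρ
  have hinv : ∀ k, (∀ i : Fin d, i.val + 2 ≤ n → g k i = τ i) ∧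
      (∀ i j : Fin d, n ≤ i.val + 1 → n ≤ j.val + 1 → g k i = g k j) ∧
      (∀ i j : Fin d, Even (i.val + 1) → i.val + 2 ≤ n → n ≤ j.val + 1 → g k j ≤ τ i) := by
    intro k
    induction k with
    | zero =>
      refine ⟨fun i _ => rfl, fun i j hi hj => hfix i j hi hj, fun i j hie hi hjn => ?_⟩
      apply hord
      rcases Nat.even_or_odd (j.val + 1) with hje | hjo
      · exact Or.inr (Or.inr ⟨hje, hie, by omega⟩)
      · exact Or.inl ⟨hjo, hie⟩
    | succ k ih =>
      obtain ⟨iha, ihb, ihc⟩ := ih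
      refine ⟨?_, ?_, ?_⟩
      · intro i hi
        rw [hgs]
        show δ (fun j => g k (min i j)) = τ i
        have h1 : (fun j => g k (min i j)) = fun j => τ (min i j) := by
          funext j
          exact iha _ (by have := fin_val_min i j; omega)
        rw [h1]
        exact hsat i hi
      · intro i j hi hj
        rw [hgs]
        show δ (fun l => g k (min i l)) = δ (fun l => g k (min j l))
        congr 1
        funext l
        by_cases hl : n ≤ l.val + 1
        · have hv1 := fin_val_min i l
          have hv2 := fin_val_min j l
          exact ihb _ _ (by omega) (by omega)
        · have h1 : min i l = l := min_eq_right (Fin.le_def.mpr (by omega))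
          have h2 : min j l = l := min_eq_right (Fin.le_def.mpr (by omega))
          rw [h1, h2]
      · intro i j hie hi hjn
        rw [hgs]
        show δ (fun l => g k (min j l)) ≤ τ i
        have h2 : δ (fun l => τ (min i l)) = τ i := hsat i hi
        rw [← h2]
        apply hmono
        intro l
        show g k (min j l) ≤ τ (min i l)
        by_cases hl1 : l.val < i.val
        · have h1 : min j l = l := min_eq_right (Fin.le_def.mpr (by omega))
          have h3 : min i l = l := min_eq_right (Fin.le_def.mpr (by omega))
          rw [h1, h3, iha l (by omega)]
        · have h3 : min i l = i := min_eq_left (Fin.le_def.mpr (by omega))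
          rw [h3]
          by_cases hl2 : n ≤ (min j l).val + 1
          · exact ihc i (min j l) hie hi hl2
          · have hvm := fin_val_min j l
            have h1 : min j l = l := min_eq_right (Fin.le_def.mpr (by omega))
            rw [h1] at hl2 ⊢
            rw [iha l (by omega)]
            apply hord
            rcases Nat.even_or_odd (l.val + 1) with h | h
            · exact Or.inr (Or.inr ⟨h, hie, by omega⟩)
            · exact Or.inl ⟨h, hie⟩
  have hsa : ∀ i : Fin d, i.val + 2 ≤ n → σ i = τ i := by
    intro i hi
    rw [hσdef, iSup_apply]
    apply le_antisymm
    · exact iSup_le fun k => ((hinv k).1 i hi).le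
    · exact le_iSup_of_le 0 le_rfl
  have hsb : ∀ i j : Fin d, n ≤ i.val + 1 → n ≤ j.val + 1 → σ i = σ j := by
    intro i j hi hj
    rw [hσdef, iSup_apply, iSup_apply]
    exact iSup_congr fun k => (hinv k).2.1 i j hi hj
  have hsc : ∀ i j : Fin d, Even (i.val + 1) → i.val + 2 ≤ n → n ≤ j.val + 1 → σ j ≤ τ i := by
    intro i j hie hi hj
    rw [hσdef, iSup_apply]
    exact iSup_le fun k => (hinv k).2.2 i j hie hi hj
  refine ⟨σ, hleast, ⟨?_, ?_, ?_, ?_, ?_⟩, hsa⟩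
  · intro i j hp
    by_cases hi : i.val + 2 ≤ n
    · calc σ i = τ i := hsa i hi
        _ ≤ τ j := hord i j hp
        _ ≤ σ j := hτσ j
    · have hi' : n ≤ i.val + 1 := by omega
      by_cases hj : j.val + 2 ≤ n
      · rw [hsa j hj]
        rcases hp with ⟨hio, hje⟩ | ⟨hio, hjo, hij⟩ | ⟨hie, hje, hji⟩
        · exact hsc j i hje hj hi'
        · omega
        · exact hsc j i hje hj hi'
      · exact (hsb i j hi' (by omega)).le
  · intro i j hi hj
    exact hsb i j (by omega) (by omega)
  · intro i _
    exact congrFun hfixσ i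
  · intro _
    exact hfixσ.ge
  · intro _
    exact hfixσ.le

lemma even_case (hmono : Monotone δ) (hcont : ChainContinuous δ)
    {n : ℕ} (heven : Even n) {τ : Fin d → V} (hτ : τ ∈ SN δ n) :
    ∃ σ : Fin d → V, IsGreatest {z | z ∈ (PFunc.total (Delta δ)).Fix ∧ z ≤ τ} σ ∧
      σ ∈ SN δ (n + 1) ∧ ∀ i : Fin d, i.val + 2 ≤ n → σ i = τ i := by
  obtain ⟨hord, hfix, hsat, _, hdn⟩ := hτ
  have hle : Delta δ τ ≤ τ := hdn heven
  set g : ℕ → Fin d → V := fun k => (Delta δ)^[k] τ with hgdef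
  have hgs : ∀ k, g (k + 1) = Delta δ (g k) := fun k => Function.iterate_succ_apply' _ _ _
  have hg0 : g 0 = τ := rfl
  have hganti : Antitone g := by
    apply antitone_nat_of_succ_le
    intro k
    induction k with
    | zero => rw [hgs, hg0]; exact hle
    | succ k ih => rw [hgs k] at ih; rw [hgs (k + 1), hgs k]; exact deltaMono hmono ih
  set σ : Fin d → V := ⨅ k, g k with hσdef
  have hστ : σ ≤ τ := iInf_le g 0
  have hfixσ : Delta δ σ = σ := by
    rw [hσdef, delta_iInf hcont hganti]
    funext i
    rw [iInf_apply]
    apply le_antisymm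
    · refine le_iInf fun k => ?_
      have h1 : Delta δ (g k) i ≤ g k i := by rw [← hgs]; exact hganti (Nat.le_succ k) i
      exact (iInf_le (fun k => Delta δ (g k) i) k).trans h1
    · refine le_iInf fun k => ?_
      rw [← hgs]
      exact iInf_le (fun k => g k i) (k + 1)
  have hgreatest : IsGreatest {z | z ∈ (PFunc.total (Delta δ)).Fix ∧ z ≤ τ} σ := by
    constructor
    · exact ⟨⟨trivial, hfixσ⟩, hστ⟩
    · rintro ρ ⟨⟨-, hρ⟩, hτρ⟩
      refine le_iInf fun k => ?_
      induction k with
      | zero => exact hτρ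
      | succ k ih =>
        rw [hgs]
        calc ρ = Delta δ ρ := hρ.symm
          _ ≤ Delta δ (g k) := deltaMono hmono ih
  have hinv : ∀ k, (∀ i : Fin d, i.val + 2 ≤ n → g k i = τ i) ∧
      (∀ i j : Fin d, n ≤ i.val + 1 → n ≤ j.val + 1 → g k i = g k j) ∧
      (∀ i j : Fin d, Odd (i.val + 1) → i.val + 2 ≤ n → n ≤ j.val + 1 → τ i ≤ g k j) := by
    intro k
    induction k with
    | zero =>
      refine ⟨fun i _ => rfl, fun i j hi hj => hfix i j hi hj, fun i j hio hi hjn => ?_⟩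
      apply hord
      rcases Nat.even_or_odd (j.val + 1) with hje | hjo
      · exact Or.inl ⟨hio, hje⟩
      · exact Or.inr (Or.inl ⟨hio, hjo, by omega⟩)
    | succ k ih =>
      obtain ⟨iha, ihb, ihc⟩ := ih
      refine ⟨?_, ?_, ?_⟩
      · intro i hi
        rw [hgs]
        show δ (fun j => g k (min i j)) = τ i
        have h1 : (fun j => g k (min i j)) = fun j => τ (min i j) := by
          funext j
          exact iha _ (by have := fin_val_min i j; omega)
        rw [h1]
        exact hsat i hi
      · intro i j hi hj
        rw [hgs]
        show δ (fun l => g k (min i l)) = δ (fun l => g k (min j l))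
        congr 1
        funext l
        by_cases hl : n ≤ l.val + 1
        · have hv1 := fin_val_min i l
          have hv2 := fin_val_min j l
          exact ihb _ _ (by omega) (by omega)
        · have h1 : min i l = l := min_eq_right (Fin.le_def.mpr (by omega))
          have h2 : min j l = l := min_eq_right (Fin.le_def.mpr (by omega))
          rw [h1, h2]
      · intro i j hio hi hjn
        rw [hgs]
        show τ i ≤ δ (fun l => g k (min j l))
        have h2 : δ (fun l => τ (min i l)) = τ i := hsat i hi
        rw [← h2]
        apply hmono
        intro l
        show τ (min i l) ≤ g k (min j l)
        by_cases hl1 : l.val < i.val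
        · have h1 : min j l = l := min_eq_right (Fin.le_def.mpr (by omega))
          have h3 : min i l = l := min_eq_right (Fin.le_def.mpr (by omega))
          rw [h1, h3, iha l (by omega)]
        · have h3 : min i l = i := min_eq_left (Fin.le_def.mpr (by omega))
          rw [h3]
          by_cases hl2 : n ≤ (min j l).val + 1
          · exact ihc i (min j l) hio hi hl2
          · have hvm := fin_val_min j l
            have h1 : min j l = l := min_eq_right (Fin.le_def.mpr (by omega))
            rw [h1] at hl2 ⊢
            rw [iha l (by omega)]
            apply hord
            rcases Nat.even_or_odd (l.val + 1) with h | h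
            · exact Or.inl ⟨hio, h⟩
            · exact Or.inr (Or.inl ⟨hio, h, by omega⟩)
  have hsa : ∀ i : Fin d, i.val + 2 ≤ n → σ i = τ i := by
    intro i hi
    rw [hσdef, iInf_apply]
    apply le_antisymm
    · exact iInf_le_of_le 0 le_rfl
    · exact le_iInf fun k => ((hinv k).1 i hi).ge
  have hsb : ∀ i j : Fin d, n ≤ i.val + 1 → n ≤ j.val + 1 → σ i = σ j := by
    intro i j hi hj
    rw [hσdef, iInf_apply, iInf_apply]
    exact iInf_congr fun k => (hinv k).2.1 i j hi hj
  have hsc : ∀ i j : Fin d, Odd (i.val + 1) → i.val + 2 ≤ n → n ≤ j.val + 1 → τ i ≤ σ j := by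
    intro i j hio hi hj
    rw [hσdef, iInf_apply]
    exact le_iInf fun k => (hinv k).2.2 i j hio hi hj
  refine ⟨σ, hgreatest, ⟨?_, ?_, ?_, ?_, ?_⟩, hsa⟩
  · intro i j hp
    by_cases hj : j.val + 2 ≤ n
    · calc σ i ≤ τ i := hστ i
        _ ≤ τ j := hord i j hp
        _ = σ j := (hsa j hj).symm
    · have hj' : n ≤ j.val + 1 := by omega
      by_cases hi : i.val + 2 ≤ n
      · rw [hsa i hi]
        rcases hp with ⟨hio, hje⟩ | ⟨hio, hjo, hij⟩ | ⟨hie, hje, hji⟩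
        · exact hsc i j hio hi hj'
        · exact hsc i j hio hi hj'
        · omega
      · exact (hsb i j (by omega) hj').le
  · intro i j hi hj
    exact hsb i j (by omega) (by omega)
  · intro i _
    exact congrFun hfixσ i
  · intro _
    exact hfixσ.ge
  · intro _
    exact hfixσ.le

end Aux
/-- For odd `n ∈ {1,…,d}`: `S_n ⊆ dom(lim↑Δ)`, `lim↑Δ` maps `S_n`
into `S_{n+1}`, and `lim↑Δ` is `n`-stable on `S_n`. For even `n ∈ {1,…,d}`: the same
for `lim↓Δ`. -/
theorem stmt8 {V : Type*} [CompleteLattice V] {d : ℕ} (hd : 1 ≤ d) (hde : Even d)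
    (δ : (Fin d → V) → V) (hmono : Monotone δ) (hcont : ChainContinuous δ)
    (n : ℕ) (hn1 : 1 ≤ n) (hnd : n ≤ d) :
    (Odd n →
      SN δ n ⊆ (limUp (PFunc.total (Delta δ))).dom ∧
      (∀ τ ∈ SN δ n, (limUp (PFunc.total (Delta δ))).toFun τ ∈ SN δ (n + 1)) ∧
      NStableOn (limUp (PFunc.total (Delta δ))) n (SN δ n)) ∧
    (Even n →
      SN δ n ⊆ (limDown (PFunc.total (Delta δ))).dom ∧
      (∀ τ ∈ SN δ n, (limDown (PFunc.total (Delta δ))).toFun τ ∈ SN δ (n + 1)) ∧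
      NStableOn (limDown (PFunc.total (Delta δ))) n (SN δ n)) := by
  have toFunUp_eq : ∀ τ σ : Fin d → V,
      IsLeast {z | z ∈ (PFunc.total (Delta δ)).Fix ∧ τ ≤ z} σ →
      (limUp (PFunc.total (Delta δ))).toFun τ = σ := by
    intro τ σ h
    have hex : ∃ y, IsLeast {z | z ∈ (PFunc.total (Delta δ)).Fix ∧ τ ≤ z} y := ⟨σ, h⟩
    show (if h' : ∃ y, IsLeast {z | z ∈ (PFunc.total (Delta δ)).Fix ∧ τ ≤ z} y
        then h'.choose else τ) = σ
    rw [dif_pos hex]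
    exact hex.choose_spec.unique h
  have toFunDown_eq : ∀ τ σ : Fin d → V,
      IsGreatest {z | z ∈ (PFunc.total (Delta δ)).Fix ∧ z ≤ τ} σ →
      (limDown (PFunc.total (Delta δ))).toFun τ = σ := by
    intro τ σ h
    have hex : ∃ y, IsGreatest {z | z ∈ (PFunc.total (Delta δ)).Fix ∧ z ≤ τ} y := ⟨σ, h⟩
    show (if h' : ∃ y, IsGreatest {z | z ∈ (PFunc.total (Delta δ)).Fix ∧ z ≤ τ} y
        then h'.choose else τ) = σ
    rw [dif_pos hex]
    exact hex.choose_spec.unique h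
  constructor
  · intro hodd
    have key := fun (τ : Fin d → V) (hτ : τ ∈ SN δ n) => odd_case hmono hcont hodd hτ
    have hdom : SN δ n ⊆ (limUp (PFunc.total (Delta δ))).dom := by
      intro τ hτ
      obtain ⟨σ, h1, -, -⟩ := key τ hτ
      exact ⟨σ, h1⟩
    refine ⟨hdom, ?_, hdom, ?_⟩
    · intro τ hτ
      obtain ⟨σ, h1, h2, -⟩ := key τ hτ
      rw [toFunUp_eq τ σ h1]
      exact h2
    · intro τ hτ i hi
      obtain ⟨σ, h1, -, h3⟩ := key τ hτ
      rw [toFunUp_eq τ σ h1]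
      exact h3 i hi
  · intro heven
    have key := fun (τ : Fin d → V) (hτ : τ ∈ SN δ n) => even_case hmono hcont heven hτ
    have hdom : SN δ n ⊆ (limDown (PFunc.total (Delta δ))).dom := by
      intro τ hτ
      obtain ⟨σ, h1, -, -⟩ := key τ hτ
      exact ⟨σ, h1⟩
    refine ⟨hdom, ?_, hdom, ?_⟩
    · intro τ hτ
      obtain ⟨σ, h1, h2, -⟩ := key τ hτ
      rw [toFunDown_eq τ σ h1]
      exact h2
    · intro τ hτ i hi
      obtain ⟨σ, h1, -, h3⟩ := key τ hτ
      rw [toFunDown_eq τ σ h1]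
      exact h3 i hi
end

section
/- For every n ∈ {1,…,d}, Bid_n maps S_n into S_n (i.e., τ̄ ∈ S_n implies Bid_n(τ̄) ∈ S_n), and Bid_n is n-stable on S_n, i.e., Bid_n(τ̄)_i = τ_i for every τ̄ ∈ S_n and every i ∈ {1,…,n−1}. -/
open scoped Classical

/-- `Bid_n(τ̄)_i = τ_i` for `i ≤ n−1` and `= τ_{n−2}` for `i ≥ n`
(with `τ₋₁ = ⊥`, `τ₀ = ⊤`; 1-based positions). -/
def Bid {V : Type*} [CompleteLattice V] {d : ℕ} (n : ℕ) (τ : Fin d → V) : Fin d → V :=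
  fun i =>
    if i.val + 2 ≤ n then τ i
    else if n = 1 then ⊥
    else if n = 2 then ⊤
    else if h : n - 3 < d then τ ⟨n - 3, h⟩ else ⊥

/-- `Cut_n(τ̄)_i = τ_i` for `i ≤ n−1` and `= τ_{n+1}` for `i ≥ n` (1-based positions). -/
def Cut {V : Type*} [CompleteLattice V] {d : ℕ} (n : ℕ) (τ : Fin d → V) : Fin d → V :=
  fun i =>
    if i.val + 2 ≤ n then τ i
    else if h : n < d then τ ⟨n, h⟩ else ⊥


private lemma parityLE_iff' (m k : ℕ) : ParityLE m k ↔
    (m % 2 = 1 ∧ k % 2 = 0) ∨ (m % 2 = 1 ∧ k % 2 = 1 ∧ m ≤ k) ∨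
    (m % 2 = 0 ∧ k % 2 = 0 ∧ k ≤ m) := by
  unfold ParityLE
  simp [Nat.odd_iff, Nat.even_iff]

/-- For `n ∈ {1,…,d}`, `Bid_n` maps `S_n` into `S_n` and is
`n`-stable on `S_n`: `Bid_n(τ̄)_i = τ_i` for `τ̄ ∈ S_n` and positions `i ≤ n − 1`. -/
theorem stmt9 {V : Type*} [CompleteLattice V] {d : ℕ} (hd : 1 ≤ d) (hde : Even d)
    (δ : (Fin d → V) → V) (hmono : Monotone δ) (hcont : ChainContinuous δ)
    (n : ℕ) (hn1 : 1 ≤ n) (hnd : n ≤ d) :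
    (∀ τ ∈ SN δ n, Bid n τ ∈ SN δ n) ∧
    (∀ τ ∈ SN δ n, ∀ i : Fin d, i.val + 2 ≤ n → Bid n τ i = τ i) := by
  classical
  have valmin : ∀ i j : Fin d, (min i j).val = min i.val j.val := by
    intro i j
    rcases le_total i j with h | h
    · rw [min_eq_left h, min_eq_left (Fin.le_def.mp h)]
    · rw [min_eq_right h, min_eq_right (Fin.le_def.mp h)]
  have bidlow : ∀ (τ : Fin d → V) (i : Fin d), i.val + 2 ≤ n → Bid n τ i = τ i := by
    intro τ i hi
    simp [Bid, hi]
  refine ⟨?_, fun τ _ i hi => bidlow τ i hi⟩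
  rintro τ ⟨hord, hfix, hsat, hodd, heven⟩
  set σ := Bid n τ with hσ
  have hdel : ∀ i : Fin d, i.val + 2 ≤ n → Delta δ σ i = Delta δ τ i := by
    intro i hi
    unfold Delta
    congr 1
    funext j
    apply bidlow
    have h1 : (min i j).val ≤ i.val := Fin.le_def.mp (min_le_left i j)
    omega
  have hsatσ : ∀ i : Fin d, i.val + 2 ≤ n → Delta δ σ i = σ i := by
    intro i hi
    rw [hdel i hi, hsat i hi]
    exact (bidlow τ i hi).symm
  rcases Nat.lt_or_ge n 3 with hn3 | hn3
  · interval_cases n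
    · -- n = 1
      have hb : ∀ i : Fin d, σ i = ⊥ := by
        intro i
        simp [hσ, Bid]
      refine ⟨?_, ?_, ?_, ?_, ?_⟩
      · intro i j _; rw [hb, hb]
      · intro i j _ _; rw [hb, hb]
      · intro i hi; omega
      · intro _ i; rw [hb]; exact bot_le
      · intro h; exact absurd h (by decide)
    · -- n = 2
      have ht : ∀ i : Fin d, 1 ≤ i.val → σ i = ⊤ := by
        intro i hi
        simp [hσ, Bid]
        omega
      refine ⟨?_, ?_, ?_, ?_, ?_⟩
      · intro i j hij
        rcases Nat.eq_zero_or_pos j.val with hj | hj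
        · have hi : i.val = 0 := by
            rw [parityLE_iff'] at hij
            omega
          have : i = j := Fin.ext (by omega)
          rw [this]
        · rw [ht j hj]; exact le_top
      · intro i j hi hj
        rw [ht i (by omega), ht j (by omega)]
      · exact hsatσ
      · intro h; exact absurd h (by decide)
      · intro _ i
        rcases Nat.eq_zero_or_pos i.val with hi | hi
        · exact le_of_eq (hsatσ i (by omega))
        · rw [ht i hi]; exact le_top
  · -- n ≥ 3
    have hk3 : n - 3 < d := by omega
    have hk2 : n - 2 < d := by omega
    set k : Fin d := ⟨n - 3, hk3⟩ with hkdef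
    set k2 : Fin d := ⟨n - 2, hk2⟩ with hk2def
    have hkv : k.val = n - 3 := rfl
    have hk2v : k2.val = n - 2 := rfl
    have hc : ∀ i : Fin d, ¬(i.val + 2 ≤ n) → σ i = τ k := by
      intro i hi
      show Bid n τ i = τ k
      unfold Bid
      rw [if_neg hi, if_neg (by omega), if_neg (by omega), dif_pos hk3]
    have hσk : σ k = τ k := bidlow τ k (by omega)
    have hσk2 : σ k2 = τ k2 := bidlow τ k2 (by omega)
    have hcomp_odd : Odd n → ∀ i : Fin d, ¬(i.val + 2 ≤ n) →
        (fun j => σ (min k j)) ≤ (fun j => σ (min i j)) := by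
      intro hno i hi j
      show σ (min k j) ≤ σ (min i j)
      have hno2 : n % 2 = 1 := Nat.odd_iff.mp hno
      have hmin : (min i j).val = min i.val j.val := valmin i j
      have hkj : (min k j).val = min k.val j.val := valmin k j
      rcases le_or_gt j.val (n - 3) with hjl | hjh
      · have h1 : min k j = j := Fin.ext (by rw [hkj, hkv]; omega)
        have h2 : min i j = j := Fin.ext (by rw [hmin]; omega)
        rw [h1, h2]
      · have h1 : min k j = k := Fin.ext (by rw [hkj, hkv]; omega)
        rw [h1, hσk]
        rcases le_or_gt n ((min i j).val + 1) with hh | hl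
        · rw [hc (min i j) (by omega)]
        · have h2 : min i j = k2 := Fin.ext (by rw [hmin, hk2v]; omega)
          rw [h2, hσk2]
          refine hord k k2 ?_
          rw [parityLE_iff', hkv, hk2v]
          omega
    have hcomp_even : Even n → ∀ i : Fin d, ¬(i.val + 2 ≤ n) →
        (fun j => σ (min i j)) ≤ (fun j => σ (min k j)) := by
      intro hne i hi j
      show σ (min i j) ≤ σ (min k j)
      have hne2 : n % 2 = 0 := Nat.even_iff.mp hne
      have hmin : (min i j).val = min i.val j.val := valmin i j
      have hkj : (min k j).val = min k.val j.val := valmin k j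
      rcases le_or_gt j.val (n - 3) with hjl | hjh
      · have h1 : min k j = j := Fin.ext (by rw [hkj, hkv]; omega)
        have h2 : min i j = j := Fin.ext (by rw [hmin]; omega)
        rw [h1, h2]
      · have h1 : min k j = k := Fin.ext (by rw [hkj, hkv]; omega)
        rw [h1, hσk]
        rcases le_or_gt n ((min i j).val + 1) with hh | hl
        · rw [hc (min i j) (by omega)]
        · have h2 : min i j = k2 := Fin.ext (by rw [hmin, hk2v]; omega)
          rw [h2, hσk2]
          refine hord k2 k ?_
          rw [parityLE_iff', hkv, hk2v]
          omega
    refine ⟨?_, ?_, ?_, ?_, ?_⟩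
    · -- ordered
      intro i j hij
      by_cases hi : i.val + 2 ≤ n <;> by_cases hj : j.val + 2 ≤ n
      · rw [show σ i = τ i from bidlow τ i hi, show σ j = τ j from bidlow τ j hj]
        exact hord i j hij
      · rw [show σ i = τ i from bidlow τ i hi, hc j hj]
        refine hord i k ?_
        rw [parityLE_iff'] at hij ⊢
        rw [hkv]
        omega
      · rw [hc i hi, show σ j = τ j from bidlow τ j hj]
        refine hord k j ?_
        rw [parityLE_iff'] at hij ⊢
        rw [hkv]
        omega
      · rw [hc i hi, hc j hj]
    · -- fixed
      intro i j hi hj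
      rw [hc i (by omega), hc j (by omega)]
    · exact hsatσ
    · -- odd
      intro hno i
      by_cases hi : i.val + 2 ≤ n
      · exact le_of_eq (hsatσ i hi).symm
      · calc σ i = σ k := by rw [hc i hi, hσk]
          _ = Delta δ σ k := (hsatσ k (by omega)).symm
          _ ≤ Delta δ σ i := hmono (hcomp_odd hno i hi)
    · -- even
      intro hne i
      by_cases hi : i.val + 2 ≤ n
      · exact le_of_eq (hsatσ i hi)
      · calc Delta δ σ i ≤ Delta δ σ k := hmono (hcomp_even hne i hi)
          _ = σ k := hsatσ k (by omega)
          _ = σ i := by rw [hc i hi, hσk]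
end

section
/- For every monotone function f : V² → V on a complete lattice V, we have νx.μy.f(x, x∧y) = νx.μy.f(x,y) and μx.νy.f(x, x∨y) = μx.νy.f(x,y). -/
theorem lfpOf_le {V : Type*} [CompleteLattice V] {f : V → V} {a : V} (h : f a ≤ a) :
    lfpOf f ≤ a := sInf_le h

theorem le_gfpOf {V : Type*} [CompleteLattice V] {f : V → V} {a : V} (h : a ≤ f a) :
    a ≤ gfpOf f := le_sSup h

theorem lfpOf_mono {V : Type*} [CompleteLattice V] {f g : V → V} (h : ∀ y, f y ≤ g y) :
    lfpOf f ≤ lfpOf g :=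
  le_sInf fun b hb => sInf_le ((h b).trans hb)

theorem gfpOf_mono {V : Type*} [CompleteLattice V] {f g : V → V} (h : ∀ y, f y ≤ g y) :
    gfpOf f ≤ gfpOf g :=
  sSup_le fun b hb => le_sSup (hb.trans (h b))

theorem map_lfpOf {V : Type*} [CompleteLattice V] {f : V → V} (hf : Monotone f) :
    f (lfpOf f) = lfpOf f := by
  have h1 : f (lfpOf f) ≤ lfpOf f :=
    le_sInf fun b hb => (hf (sInf_le hb)).trans hb
  exact le_antisymm h1 (sInf_le (hf h1))

theorem map_gfpOf {V : Type*} [CompleteLattice V] {f : V → V} (hf : Monotone f) :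
    f (gfpOf f) = gfpOf f := by
  have h1 : gfpOf f ≤ f (gfpOf f) :=
    sSup_le fun b hb => hb.trans (hf (le_sSup hb))
  exact le_antisymm (le_sSup (hf h1)) h1

/-- For every monotone `f : V² → V` on a complete lattice `V`,
`νx.μy.f(x, x∧y) = νx.μy.f(x,y)` and `μx.νy.f(x, x∨y) = μx.νy.f(x,y)`. -/
theorem stmt12 {V : Type*} [CompleteLattice V] (f : V → V → V)
    (hf : Monotone fun p : V × V => f p.1 p.2) :
    gfpOf (fun x => lfpOf (fun y => f x (x ⊓ y))) =
      gfpOf (fun x => lfpOf (fun y => f x y)) ∧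
    lfpOf (fun x => gfpOf (fun y => f x (x ⊔ y))) =
      lfpOf (fun x => gfpOf (fun y => f x y)) := by
  have hmono : ∀ {x x' y y' : V}, x ≤ x' → y ≤ y' → f x y ≤ f x' y' :=
    fun hx hy => hf (Prod.mk_le_mk.mpr ⟨hx, hy⟩)
  constructor
  · apply le_antisymm
    · exact gfpOf_mono fun x => lfpOf_mono fun y => hmono le_rfl inf_le_right
    · set G := gfpOf (fun x => lfpOf (fun y => f x y)) with hG
      have hh : Monotone (fun x => lfpOf (fun y => f x y)) :=
        fun x x' hx => lfpOf_mono fun y => hmono hx le_rfl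
      have hGfix : lfpOf (fun y => f G y) = G := map_gfpOf hh
      have hGG : f G G = G := by
        have h2 := map_lfpOf (f := fun y => f G y) (fun y y' hy => hmono le_rfl hy)
        rw [hGfix] at h2; exact h2
      set a := lfpOf (fun y => f G (G ⊓ y)) with ha
      have hafix : f G (G ⊓ a) = a :=
        map_lfpOf (fun y y' hy => hmono le_rfl (inf_le_inf_left _ hy))
      have haG : a ≤ G := by
        rw [← hafix]; exact (hmono le_rfl inf_le_left).trans hGG.le
      have hinf : G ⊓ a = a := inf_eq_right.mpr haG
      have hafix' : f G a = a := by rw [hinf] at hafix; exact hafix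
      have hGa : G ≤ a := by
        rw [← hGfix]; exact lfpOf_le hafix'.le
      exact le_gfpOf hGa
  · apply le_antisymm
    · set G := lfpOf (fun x => gfpOf (fun y => f x y)) with hG
      have hh : Monotone (fun x => gfpOf (fun y => f x y)) :=
        fun x x' hx => gfpOf_mono fun y => hmono hx le_rfl
      have hGfix : gfpOf (fun y => f G y) = G := map_lfpOf hh
      have hGG : f G G = G := by
        have h2 := map_gfpOf (f := fun y => f G y) (fun y y' hy => hmono le_rfl hy)
        rw [hGfix] at h2; exact h2
      set a := gfpOf (fun y => f G (G ⊔ y)) with ha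
      have hafix : f G (G ⊔ a) = a :=
        map_gfpOf (fun y y' hy => hmono le_rfl (sup_le_sup_left hy _))
      have haG : G ≤ a := by
        rw [← hafix]; exact hGG.ge.trans (hmono le_rfl le_sup_left)
      have hsup : G ⊔ a = a := sup_eq_right.mpr haG
      have hafix' : f G a = a := by rw [hsup] at hafix; exact hafix
      have hGa : a ≤ G := by
        rw [← hGfix]; exact le_gfpOf hafix'.ge
      exact lfpOf_le hGa
    · exact lfpOf_mono fun x => gfpOf_mono fun y => hmono le_rfl le_sup_right
end

section
/- Let R be a finite complete lattice. Then every nonempty chain C in the partial order (D(R), ⪯) has a supremum and an infimum in (D(R), ⪯). -/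
open scoped Classical

/-- The set of probability distributions on a finite set `R`. -/
def PDist (R : Type*) [Fintype R] : Set (R → ℝ) :=
  {α | (∀ r, 0 ≤ α r) ∧ ∑ r, α r = 1}

/-- `U` is upward closed. -/
def UpClosed {R : Type*} [Preorder R] (U : Set R) : Prop :=
  ∀ a b : R, a ∈ U → a ≤ b → b ∈ U

/-- `Σ_{r ∈ U} α(r)`. -/
noncomputable def usum {R : Type*} [Fintype R] (α : R → ℝ) (U : Set R) : ℝ :=
  ∑ r, Set.indicator U α r

/-- The order `α ⪯ β`: `Σ_{r∈U} α(r) ≤ Σ_{r∈U} β(r)` for every upward-closed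
`U ⊆ R`. -/
def dle {R : Type*} [Fintype R] [Preorder R] (α β : R → ℝ) : Prop :=
  ∀ U : Set R, UpClosed U → usum α U ≤ usum β U

set_option linter.unusedSectionVars false

section Aux

variable {R : Type*} [Fintype R]

lemma usum_mono {α : R → ℝ} (hα : ∀ r, 0 ≤ α r) {U V : Set R} (h : U ⊆ V) :
    usum α U ≤ usum α V := by
  apply Finset.sum_le_sum
  intro r _
  exact Set.indicator_le_indicator_of_subset h hα r

lemma usum_nonneg {α : R → ℝ} (hα : ∀ r, 0 ≤ α r) (U : Set R) : 0 ≤ usum α U :=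
  Finset.sum_nonneg fun r _ => Set.indicator_nonneg (fun x _ => hα x) r

lemma usum_univ (α : R → ℝ) : usum α Set.univ = ∑ r, α r := by
  simp [usum]

lemma usum_le_one {α : R → ℝ} (hα : α ∈ PDist R) (U : Set R) : usum α U ≤ 1 := by
  have := usum_mono hα.1 (Set.subset_univ U)
  rwa [usum_univ, hα.2] at this

lemma ind_Ici_sub_Ioi [PartialOrder R] (α : R → ℝ) (r x : R) :
    Set.indicator (Set.Ici r) α x - Set.indicator (Set.Ioi r) α x
      = if x = r then α r else 0 := by
  by_cases hx : x = r
  · subst hx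
    simp [Set.indicator_apply, Set.mem_Ici, Set.mem_Ioi, lt_irrefl]
  · by_cases h2 : r ≤ x
    · have hlt : r < x := lt_of_le_of_ne h2 (Ne.symm hx)
      simp [Set.indicator_apply, Set.mem_Ici, Set.mem_Ioi, h2, hlt, hx]
    · have hnlt : ¬ r < x := fun h => h2 h.le
      simp [Set.indicator_apply, Set.mem_Ici, Set.mem_Ioi, h2, hnlt, hx]

lemma usum_Ici_sub_Ioi [PartialOrder R] (α : R → ℝ) (r : R) :
    usum α (Set.Ici r) - usum α (Set.Ioi r) = α r := by
  rw [usum, usum, ← Finset.sum_sub_distrib,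
    Finset.sum_congr rfl (fun x _ => ind_Ici_sub_Ioi α r x)]
  simp

lemma upClosed_Ici [Preorder R] (r : R) : UpClosed (Set.Ici r) :=
  fun _ _ ha hab => le_trans ha hab

lemma upClosed_Ioi [Preorder R] (r : R) : UpClosed (Set.Ioi r) :=
  fun _ _ ha hab => lt_of_lt_of_le ha hab

lemma upClosed_univ [Preorder R] : UpClosed (Set.univ : Set R) :=
  fun _ _ _ _ => trivial

lemma dle_refl [Preorder R] (α : R → ℝ) : dle α α := fun _ _ => le_rfl

lemma dle_trans [Preorder R] {α β γ : R → ℝ} (h1 : dle α β) (h2 : dle β γ) : dle α γ :=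
  fun U hU => le_trans (h1 U hU) (h2 U hU)

lemma chain_greatest [Preorder R] {C : Set (R → ℝ)}
    (hchain : ∀ α ∈ C, ∀ β ∈ C, dle α β ∨ dle β α)
    {I : Type*} (g : I → R → ℝ) :
    ∀ s : Finset I, s.Nonempty → (∀ i ∈ s, g i ∈ C) →
      ∃ j ∈ s, ∀ i ∈ s, dle (g i) (g j) := by
  intro s
  induction s using Finset.cons_induction with
  | empty => intro h; exact absurd h (by simp)
  | cons a s ha ih =>
    intro _ hg
    rcases s.eq_empty_or_nonempty with h | h
    · subst h
      exact ⟨a, by simp, by simp [dle_refl]⟩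
    · obtain ⟨j, hj, hmax⟩ := ih h (fun i hi => hg i (Finset.mem_cons_of_mem hi))
      rcases hchain (g a) (hg a (Finset.mem_cons_self a s))
          (g j) (hg j (Finset.mem_cons_of_mem hj)) with hle | hle
      · refine ⟨j, Finset.mem_cons_of_mem hj, fun i hi => ?_⟩
        rcases Finset.mem_cons.mp hi with rfl | hi
        · exact hle
        · exact hmax i hi
      · refine ⟨a, Finset.mem_cons_self a s, fun i hi => ?_⟩
        rcases Finset.mem_cons.mp hi with rfl | hi
        · exact dle_refl _
        · exact dle_trans (hmax i hi) hle

lemma chain_least [Preorder R] {C : Set (R → ℝ)}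
    (hchain : ∀ α ∈ C, ∀ β ∈ C, dle α β ∨ dle β α)
    {I : Type*} (g : I → R → ℝ) :
    ∀ s : Finset I, s.Nonempty → (∀ i ∈ s, g i ∈ C) →
      ∃ j ∈ s, ∀ i ∈ s, dle (g j) (g i) := by
  intro s
  induction s using Finset.cons_induction with
  | empty => intro h; exact absurd h (by simp)
  | cons a s ha ih =>
    intro _ hg
    rcases s.eq_empty_or_nonempty with h | h
    · subst h
      exact ⟨a, by simp, by simp [dle_refl]⟩
    · obtain ⟨j, hj, hmin⟩ := ih h (fun i hi => hg i (Finset.mem_cons_of_mem hi))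
      rcases hchain (g a) (hg a (Finset.mem_cons_self a s))
          (g j) (hg j (Finset.mem_cons_of_mem hj)) with hle | hle
      · refine ⟨a, Finset.mem_cons_self a s, fun i hi => ?_⟩
        rcases Finset.mem_cons.mp hi with rfl | hi
        · exact dle_refl _
        · exact dle_trans hle (hmin i hi)
      · refine ⟨j, Finset.mem_cons_of_mem hj, fun i hi => ?_⟩
        rcases Finset.mem_cons.mp hi with rfl | hi
        · exact hle
        · exact hmin i hi

end Aux

theorem stmt19' {R : Type*} [Fintype R] [PartialOrder R]
    (C : Set (R → ℝ)) (hC : C ⊆ PDist R) (hne : C.Nonempty)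
    (hchain : ∀ α ∈ C, ∀ β ∈ C, dle α β ∨ dle β α) :
    (∃ γ ∈ PDist R, (∀ α ∈ C, dle α γ) ∧
      ∀ γ' ∈ PDist R, (∀ α ∈ C, dle α γ') → dle γ γ') ∧
    (∃ γ ∈ PDist R, (∀ α ∈ C, dle γ α) ∧
      ∀ γ' ∈ PDist R, (∀ α ∈ C, dle γ' α) → dle γ' γ) := by
  obtain ⟨α₀, hα₀⟩ := hne
  haveI : Fintype (Set R) := Fintype.ofFinite _
  set K : ℝ := (Fintype.card R : ℝ) + 1 with hK
  have hKpos : 0 < K := by positivity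
  constructor
  -- SUPREMUM
  · set σ : Set R → ℝ := fun U => sSup ((fun α => usum α U) '' C) with hσdef
    have hbdd : ∀ U : Set R, BddAbove ((fun α => usum α U) '' C) := fun U =>
      ⟨1, by rintro x ⟨α, hα, rfl⟩; exact usum_le_one (hC hα) U⟩
    have hneI : ∀ U : Set R, ((fun α => usum α U) '' C).Nonempty :=
      fun U => ⟨usum α₀ U, α₀, hα₀, rfl⟩
    have hσ_ge : ∀ U : Set R, ∀ α ∈ C, usum α U ≤ σ U :=
      fun U α hα => le_csSup (hbdd U) ⟨α, hα, rfl⟩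
    have hσ_le : ∀ (U : Set R) (b : ℝ), (∀ α ∈ C, usum α U ≤ b) → σ U ≤ b :=
      fun U b h => csSup_le (hneI U) (by rintro x ⟨α, hα, rfl⟩; exact h α hα)
    have happrox : ∀ ε > (0:ℝ), ∃ α ∈ C, ∀ U : Set R, UpClosed U → σ U - ε < usum α U := by
      intro ε hε
      have hch : ∀ U : Set R, ∃ α, α ∈ C ∧ (UpClosed U → σ U - ε < usum α U) := by
        intro U
        by_cases hU : UpClosed U
        · obtain ⟨x, ⟨α, hα, rfl⟩, hx⟩ :=
            exists_lt_of_lt_csSup (hneI U) (by linarith : σ U - ε < σ U)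
          exact ⟨α, hα, fun _ => hx⟩
        · exact ⟨α₀, hα₀, fun h => absurd h hU⟩
      choose g hg hg' using hch
      obtain ⟨j, _, hmax⟩ := chain_greatest hchain g Finset.univ
        ⟨∅, Finset.mem_univ _⟩ (fun i _ => hg i)
      exact ⟨g j, hg j, fun U hU =>
        lt_of_lt_of_le (hg' U hU) (hmax U (Finset.mem_univ U) U hU)⟩
    set γ : R → ℝ := fun r => σ (Set.Ici r) - σ (Set.Ioi r) with hγdef
    have key : ∀ U : Set R, UpClosed U → usum γ U = σ U := by
      intro U hU
      have hεbound : ∀ ε > (0:ℝ), |usum γ U - σ U| ≤ K * ε := by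
        intro ε hε
        obtain ⟨α, hαC, happ⟩ := happrox ε hε
        have hγα : ∀ r, |γ r - α r| ≤ ε := by
          intro r
          have e := usum_Ici_sub_Ioi α r
          have h1 := happ (Set.Ici r) (upClosed_Ici r)
          have h2 := happ (Set.Ioi r) (upClosed_Ioi r)
          have h3 := hσ_ge (Set.Ici r) α hαC
          have h4 := hσ_ge (Set.Ioi r) α hαC
          rw [abs_le]
          constructor <;> simp only [hγdef] <;> linarith
        have hstep : |usum γ U - usum α U| ≤ (Fintype.card R : ℝ) * ε := by
          have h1 : usum γ U - usum α U
              = ∑ r, (Set.indicator U γ r - Set.indicator U α r) := by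
            rw [usum, usum, Finset.sum_sub_distrib]
          rw [h1]
          calc |∑ r, (Set.indicator U γ r - Set.indicator U α r)|
              ≤ ∑ r, |Set.indicator U γ r - Set.indicator U α r| :=
                Finset.abs_sum_le_sum_abs _ _
            _ ≤ ∑ _r : R, ε := by
                apply Finset.sum_le_sum
                intro r _
                by_cases hr : r ∈ U
                · simp only [Set.indicator_of_mem hr]; exact hγα r
                · simp only [Set.indicator_of_notMem hr]; simpa using hε.le
            _ = (Fintype.card R : ℝ) * ε := by
                rw [Finset.sum_const, Finset.card_univ, nsmul_eq_mul]
        have hlast : |usum α U - σ U| ≤ ε := by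
          have h1 := happ U hU
          have h2 := hσ_ge U α hαC
          rw [abs_le]; constructor <;> linarith
        calc |usum γ U - σ U| ≤ |usum γ U - usum α U| + |usum α U - σ U| :=
              abs_sub_le _ _ _
          _ ≤ (Fintype.card R : ℝ) * ε + ε := add_le_add hstep hlast
          _ = K * ε := by rw [hK]; ring
      by_contra h
      have hd : 0 < |usum γ U - σ U| := abs_pos.mpr (sub_ne_zero.mpr h)
      have := hεbound (|usum γ U - σ U| / (2 * K)) (by positivity)
      have heq : K * (|usum γ U - σ U| / (2 * K)) = |usum γ U - σ U| / 2 := by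
        field_simp
      rw [heq] at this
      linarith
    have hγnonneg : ∀ r, 0 ≤ γ r := by
      intro r
      have : σ (Set.Ioi r) ≤ σ (Set.Ici r) := by
        apply hσ_le
        intro α hα
        exact le_trans (usum_mono (hC hα).1 Set.Ioi_subset_Ici_self) (hσ_ge _ α hα)
      simp only [hγdef]; linarith
    have hγsum : ∑ r, γ r = 1 := by
      have h1 : usum γ Set.univ = σ Set.univ := key Set.univ upClosed_univ
      have h2 : σ Set.univ = 1 := by
        apply le_antisymm
        · apply hσ_le
          intro α hα
          rw [usum_univ, (hC hα).2]
        · have := hσ_ge Set.univ α₀ hα₀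
          rwa [usum_univ, (hC hα₀).2] at this
      rw [← usum_univ, h1, h2]
    refine ⟨γ, ⟨hγnonneg, hγsum⟩, fun α hα U hU => ?_, fun γ' _ hub U hU => ?_⟩
    · rw [key U hU]; exact hσ_ge U α hα
    · rw [key U hU]; exact hσ_le U _ (fun α hα => hub α hα U hU)
  -- INFIMUM
  · set σ : Set R → ℝ := fun U => sInf ((fun α => usum α U) '' C) with hσdef
    have hbdd : ∀ U : Set R, BddBelow ((fun α => usum α U) '' C) := fun U =>
      ⟨0, by rintro x ⟨α, hα, rfl⟩; exact usum_nonneg (hC hα).1 U⟩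
    have hneI : ∀ U : Set R, ((fun α => usum α U) '' C).Nonempty :=
      fun U => ⟨usum α₀ U, α₀, hα₀, rfl⟩
    have hσ_le : ∀ U : Set R, ∀ α ∈ C, σ U ≤ usum α U :=
      fun U α hα => csInf_le (hbdd U) ⟨α, hα, rfl⟩
    have hσ_ge : ∀ (U : Set R) (b : ℝ), (∀ α ∈ C, b ≤ usum α U) → b ≤ σ U :=
      fun U b h => le_csInf (hneI U) (by rintro x ⟨α, hα, rfl⟩; exact h α hα)
    have happrox : ∀ ε > (0:ℝ), ∃ α ∈ C, ∀ U : Set R, UpClosed U → usum α U < σ U + ε := by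
      intro ε hε
      have hch : ∀ U : Set R, ∃ α, α ∈ C ∧ (UpClosed U → usum α U < σ U + ε) := by
        intro U
        by_cases hU : UpClosed U
        · obtain ⟨x, ⟨α, hα, rfl⟩, hx⟩ :=
            exists_lt_of_csInf_lt (hneI U) (by linarith : σ U < σ U + ε)
          exact ⟨α, hα, fun _ => hx⟩
        · exact ⟨α₀, hα₀, fun h => absurd h hU⟩
      choose g hg hg' using hch
      obtain ⟨j, _, hmin⟩ := chain_least hchain g Finset.univ
        ⟨∅, Finset.mem_univ _⟩ (fun i _ => hg i)
      exact ⟨g j, hg j, fun U hU =>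
        lt_of_le_of_lt (hmin U (Finset.mem_univ U) U hU) (hg' U hU)⟩
    set γ : R → ℝ := fun r => σ (Set.Ici r) - σ (Set.Ioi r) with hγdef
    have key : ∀ U : Set R, UpClosed U → usum γ U = σ U := by
      intro U hU
      have hεbound : ∀ ε > (0:ℝ), |usum γ U - σ U| ≤ K * ε := by
        intro ε hε
        obtain ⟨α, hαC, happ⟩ := happrox ε hε
        have hγα : ∀ r, |γ r - α r| ≤ ε := by
          intro r
          have e := usum_Ici_sub_Ioi α r
          have h1 := happ (Set.Ici r) (upClosed_Ici r)
          have h2 := happ (Set.Ioi r) (upClosed_Ioi r)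
          have h3 := hσ_le (Set.Ici r) α hαC
          have h4 := hσ_le (Set.Ioi r) α hαC
          rw [abs_le]
          constructor <;> simp only [hγdef] <;> linarith
        have hstep : |usum γ U - usum α U| ≤ (Fintype.card R : ℝ) * ε := by
          have h1 : usum γ U - usum α U
              = ∑ r, (Set.indicator U γ r - Set.indicator U α r) := by
            rw [usum, usum, Finset.sum_sub_distrib]
          rw [h1]
          calc |∑ r, (Set.indicator U γ r - Set.indicator U α r)|
              ≤ ∑ r, |Set.indicator U γ r - Set.indicator U α r| :=
                Finset.abs_sum_le_sum_abs _ _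
            _ ≤ ∑ _r : R, ε := by
                apply Finset.sum_le_sum
                intro r _
                by_cases hr : r ∈ U
                · simp only [Set.indicator_of_mem hr]; exact hγα r
                · simp only [Set.indicator_of_notMem hr]; simpa using hε.le
            _ = (Fintype.card R : ℝ) * ε := by
                rw [Finset.sum_const, Finset.card_univ, nsmul_eq_mul]
        have hlast : |usum α U - σ U| ≤ ε := by
          have h1 := happ U hU
          have h2 := hσ_le U α hαC
          rw [abs_le]; constructor <;> linarith
        calc |usum γ U - σ U| ≤ |usum γ U - usum α U| + |usum α U - σ U| :=
              abs_sub_le _ _ _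
          _ ≤ (Fintype.card R : ℝ) * ε + ε := add_le_add hstep hlast
          _ = K * ε := by rw [hK]; ring
      by_contra h
      have hd : 0 < |usum γ U - σ U| := abs_pos.mpr (sub_ne_zero.mpr h)
      have := hεbound (|usum γ U - σ U| / (2 * K)) (by positivity)
      have heq : K * (|usum γ U - σ U| / (2 * K)) = |usum γ U - σ U| / 2 := by
        field_simp
      rw [heq] at this
      linarith
    have hγnonneg : ∀ r, 0 ≤ γ r := by
      intro r
      have : σ (Set.Ioi r) ≤ σ (Set.Ici r) := by
        apply hσ_ge
        intro α hα
        exact le_trans (hσ_le _ α hα) (usum_mono (hC hα).1 Set.Ioi_subset_Ici_self)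
      simp only [hγdef]; linarith
    have hγsum : ∑ r, γ r = 1 := by
      have h1 : usum γ Set.univ = σ Set.univ := key Set.univ upClosed_univ
      have h2 : σ Set.univ = 1 := by
        apply le_antisymm
        · have := hσ_le Set.univ α₀ hα₀
          rwa [usum_univ, (hC hα₀).2] at this
        · apply hσ_ge
          intro α hα
          rw [usum_univ, (hC hα).2]
      rw [← usum_univ, h1, h2]
    refine ⟨γ, ⟨hγnonneg, hγsum⟩, fun α hα U hU => ?_, fun γ' _ hlb U hU => ?_⟩
    · rw [key U hU]; exact hσ_le U α hα
    · rw [key U hU]; exact hσ_ge U _ (fun α hα => hlb α hα U hU)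

/-- Let `R` be a finite complete lattice. Then every nonempty
chain `C` in the partial order `(D(R), ⪯)` has a supremum and an infimum in
`(D(R), ⪯)`. -/
theorem stmt19 {R : Type*} [Fintype R] [CompleteLattice R]
    (C : Set (R → ℝ)) (hC : C ⊆ PDist R) (hne : C.Nonempty)
    (hchain : ∀ α ∈ C, ∀ β ∈ C, dle α β ∨ dle β α) :
    (∃ γ ∈ PDist R, (∀ α ∈ C, dle α γ) ∧
      ∀ γ' ∈ PDist R, (∀ α ∈ C, dle α γ') → dle γ γ') ∧
    (∃ γ ∈ PDist R, (∀ α ∈ C, dle γ α) ∧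
      ∀ γ' ∈ PDist R, (∀ α ∈ C, dle γ' α) → dle γ' γ) :=
  stmt19' C hC hne hchain
end
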